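/- arXiv:1710.04054 — 7 statements merged into one kernel-verified Lean document; each statement's English description precedes it below -/
import Mathlib

section
/- For smooth solutions of the layer-averaged hydrostatic Euler system, each layer satisfies the energy balance ∂t E_α + ∂x( u_α ( E_α + (g h /2) h_α ) ) = ( u_{α+1/2} u_α − u_α²/2 + g η ) G_{α+1/2} − ( u_{α−1/2} u_α − u_α²/2 + g η ) G_{α−1/2}, for every α = 1,…,N. -/
open Finset

/-- Partial derivative in time of a function of `(t,x)`. -/
noncomputable def pt (f : ℝ → ℝ → ℝ) (t x : ℝ) : ℝ := deriv (fun s => f s x) t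

/-- Partial derivative in space of a function of `(t,x)`. -/
noncomputable def px (f : ℝ → ℝ → ℝ) (t x : ℝ) : ℝ := deriv (fun y => f t y) x

/-!
Multiply the momentum equation of layer `α` by `u_α` and add `g η - u_α² / 2` times the layer
mass equation `∂t h_α + ∂x (h_α u_α) = G_{α+1/2} - G_{α-1/2}`. By the product rule the time
derivatives combine into `∂t E_α` and the space derivatives into `∂x (u_α (E_α + (g h / 2) h_α))`
minus `g h_α u_α ∂x z_b`, which cancels the topography source of the momentum equation.
-/

theorem DifferentiableAt.curry_left {𝕜 E F G : Type*} [NontriviallyNormedField 𝕜]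
    [NormedAddCommGroup E] [NormedSpace 𝕜 E] [NormedAddCommGroup F] [NormedSpace 𝕜 F]
    [NormedAddCommGroup G] [NormedSpace 𝕜 G] {f : E → F → G} {x : E} {y : F}
    (hf : DifferentiableAt 𝕜 (Function.uncurry f) (x, y)) :
    DifferentiableAt 𝕜 (fun x => f x y) x :=
  hf.comp (f := fun x => (x, y)) x (by fun_prop)

theorem DifferentiableAt.curry_right {𝕜 E F G : Type*} [NontriviallyNormedField 𝕜]
    [NormedAddCommGroup E] [NormedSpace 𝕜 E] [NormedAddCommGroup F] [NormedSpace 𝕜 F]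
    [NormedAddCommGroup G] [NormedSpace 𝕜 G] {f : E → F → G} {x : E} {y : F}
    (hf : DifferentiableAt 𝕜 (Function.uncurry f) (x, y)) :
    DifferentiableAt 𝕜 (fun y => f x y) y :=
  hf.comp (f := fun y => (x, y)) y (by fun_prop)

section LayerEnergy

variable {l g s : ℝ} {h u z : ℝ → ℝ}

theorem deriv_layer_energy (hh : DifferentiableAt ℝ h s) (hu : DifferentiableAt ℝ u s)
    (hz : DifferentiableAt ℝ z s) :
    deriv (fun s => l * h s * u s ^ 2 / 2 + g * (l * h s) * (h s / 2 + z s)) s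
      = u s * deriv (fun s => l * h s * u s) s
        + (g * (h s + z s) - u s ^ 2 / 2) * deriv (fun s => l * h s) s
        + g * (l * h s) * deriv z s := by
  simp (disch := fun_prop) only [deriv_fun_add, deriv_fun_mul, deriv_div_const, deriv_fun_pow,
    deriv_const]
  ring

theorem deriv_layer_energy_flux (hh : DifferentiableAt ℝ h s) (hu : DifferentiableAt ℝ u s)
    (hz : DifferentiableAt ℝ z s) :
    deriv (fun s => u s * (l * h s * u s ^ 2 / 2 + g * (l * h s) * (h s / 2 + z s)
        + g * h s / 2 * (l * h s))) s
      = u s * deriv (fun s => l * h s * u s ^ 2 + g / 2 * (l * h s) * h s) s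
        + (g * (h s + z s) - u s ^ 2 / 2) * deriv (fun s => l * h s * u s) s
        + g * (l * h s) * u s * deriv z s := by
  simp (disch := fun_prop) only [deriv_fun_add, deriv_fun_mul, deriv_div_const, deriv_fun_pow,
    deriv_const]
  ring

end LayerEnergy

theorem layer_energy_balance_general
    (g : ℝ)
    (N : ℕ)
    (l : ℕ → ℝ)
    (zb : ℝ → ℝ) (hzb : ContDiff ℝ 1 zb)
    (h : ℝ → ℝ → ℝ) (u : ℕ → ℝ → ℝ → ℝ)
    (hhC1 : ContDiff ℝ 1 (fun p : ℝ × ℝ => h p.1 p.2))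
    (huC1 : ∀ α ∈ Icc 1 N, ContDiff ℝ 1 (fun p : ℝ × ℝ => u α p.1 p.2))
    (hlay : ℕ → ℝ → ℝ → ℝ) (hhlay : ∀ (α : ℕ) (t x : ℝ), hlay α t x = l α * h t x)
    (G : ℕ → ℝ → ℝ → ℝ)
    (hG : ∀ (α : ℕ) (t x : ℝ), G α t x =
      ∑ j ∈ Icc 1 α, (pt (hlay j) t x + px (fun t x => hlay j t x * u j t x) t x))
    (uint : ℕ → ℝ → ℝ → ℝ)
    (E : ℕ → ℝ → ℝ → ℝ)
    (hE : ∀ (α : ℕ) (t x : ℝ), E α t x =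
      hlay α t x * (u α t x) ^ 2 / 2 + g * hlay α t x * (h t x / 2 + zb x))
    (mom : ∀ α ∈ Icc 1 N, ∀ t x : ℝ,
      pt (fun t x => hlay α t x * u α t x) t x
        + px (fun t x => hlay α t x * (u α t x) ^ 2 + g / 2 * hlay α t x * h t x) t x
      = -(g * hlay α t x * deriv zb x)
        + uint α t x * G α t x - uint (α - 1) t x * G (α - 1) t x) :
    ∀ α ∈ Icc 1 N, ∀ t x : ℝ,
      pt (E α) t x
        + px (fun t x => u α t x * (E α t x + g * h t x / 2 * hlay α t x)) t x
      = (uint α t x * u α t x - (u α t x) ^ 2 / 2 + g * (h t x + zb x)) * G α t x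
        - (uint (α - 1) t x * u α t x - (u α t x) ^ 2 / 2 + g * (h t x + zb x))
            * G (α - 1) t x := by
  intro α hα t x
  obtain rfl : hlay = fun α t x => l α * h t x := by funext α t x; exact hhlay α t x
  obtain rfl : E = fun α t x => l α * h t x * u α t x ^ 2 / 2
      + g * (l α * h t x) * (h t x / 2 + zb x) := by funext α t x; exact hE α t x
  have dh := hhC1.differentiable one_ne_zero (t, x)
  have du := (huC1 α hα).differentiable one_ne_zero (t, x)
  have layer_mass : pt (fun t x => l α * h t x) t x + px (fun t x => l α * h t x * u α t x) t x
      = G α t x - G (α - 1) t x := by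
    obtain ⟨k, rfl⟩ := Nat.exists_eq_add_of_le' (mem_Icc.mp hα).1
    rw [hG, hG, sum_Icc_succ_top (by omega), Nat.add_sub_cancel]
    ring
  have time := deriv_layer_energy (l := l α) (g := g)
    (DifferentiableAt.curry_left (f := h) dh) (DifferentiableAt.curry_left (f := u α) du)
    (differentiableAt_const (zb x))
  have space := deriv_layer_energy_flux (l := l α) (g := g)
    (DifferentiableAt.curry_right (f := h) dh) (DifferentiableAt.curry_right (f := u α) du)
    (hzb.differentiable one_ne_zero x)
  rw [deriv_const, mul_zero, add_zero] at time
  simp only [pt, px] at layer_mass mom ⊢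
  linear_combination time + space + u α t x * mom α hα t x
    + (g * (h t x + zb x) - u α t x ^ 2 / 2) * layer_mass

/-- Layer energy balance for smooth solutions of the layer-averaged hydrostatic Euler
system: for every layer `α = 1,…,N`,
`∂t E_α + ∂x(u_α(E_α + (gh/2)h_α))
  = (u_{α+1/2}u_α − u_α²/2 + gη)G_{α+1/2} − (u_{α−1/2}u_α − u_α²/2 + gη)G_{α−1/2}`,
where `h_α = l_α h`, `η = h + z_b`, `E_α = h_α u_α²/2 + g h_α (h/2 + z_b)`,
`G_{α+1/2} = Σ_{j≤α} (∂t h_j + ∂x(h_j u_j))` (index `α` stands for interface `α+1/2`,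
so `G 0 = G_{1/2} = 0` is the empty sum and `G N = G_{N+1/2} = 0`), and
`u_{α+1/2} = u_α` if `G_{α+1/2} ≤ 0`, `u_{α+1}` otherwise. -/
theorem layer_energy_balance
    (g : ℝ) (hg : 0 < g)
    (N : ℕ) (hN : 1 ≤ N)
    (l : ℕ → ℝ) (hl : ∀ α ∈ Icc 1 N, 0 < l α)
    (hlsum : ∑ α ∈ Icc 1 N, l α = 1)
    (zb : ℝ → ℝ) (hzb : ContDiff ℝ 1 zb)
    (h : ℝ → ℝ → ℝ) (u : ℕ → ℝ → ℝ → ℝ)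
    (hhC1 : ContDiff ℝ 1 (fun p : ℝ × ℝ => h p.1 p.2))
    (hhnn : ∀ t x, 0 ≤ h t x)
    (huC1 : ∀ α ∈ Icc 1 N, ContDiff ℝ 1 (fun p : ℝ × ℝ => u α p.1 p.2))
    (hlay : ℕ → ℝ → ℝ → ℝ) (hhlay : ∀ (α : ℕ) (t x : ℝ), hlay α t x = l α * h t x)
    (G : ℕ → ℝ → ℝ → ℝ)
    (hG : ∀ (α : ℕ) (t x : ℝ), G α t x =
      ∑ j ∈ Icc 1 α, (pt (hlay j) t x + px (fun t x => hlay j t x * u j t x) t x))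
    (hGN : ∀ t x, G N t x = 0)
    (uint : ℕ → ℝ → ℝ → ℝ)
    (huint : ∀ (α : ℕ) (t x : ℝ),
      uint α t x = if G α t x ≤ 0 then u α t x else u (α + 1) t x)
    (E : ℕ → ℝ → ℝ → ℝ)
    (hE : ∀ (α : ℕ) (t x : ℝ), E α t x =
      hlay α t x * (u α t x) ^ 2 / 2 + g * hlay α t x * (h t x / 2 + zb x))
    (mass : ∀ t x,
      pt h t x + ∑ α ∈ Icc 1 N, px (fun t x => hlay α t x * u α t x) t x = 0)
    (mom : ∀ α ∈ Icc 1 N, ∀ t x : ℝ,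
      pt (fun t x => hlay α t x * u α t x) t x
        + px (fun t x => hlay α t x * (u α t x) ^ 2 + g / 2 * hlay α t x * h t x) t x
      = -(g * hlay α t x * deriv zb x)
        + uint α t x * G α t x - uint (α - 1) t x * G (α - 1) t x) :
    ∀ α ∈ Icc 1 N, ∀ t x : ℝ,
      pt (E α) t x
        + px (fun t x => u α t x * (E α t x + g * h t x / 2 * hlay α t x)) t x
      = (uint α t x * u α t x - (u α t x) ^ 2 / 2 + g * (h t x + zb x)) * G α t x
        - (uint (α - 1) t x * u α t x - (u α t x) ^ 2 / 2 + g * (h t x + zb x))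
            * G (α - 1) t x :=
  layer_energy_balance_general g N l zb hzb h u hhC1 huC1 hlay hhlay G hG uint E hE mom
end

section
/- For smooth solutions of the layer-averaged hydrostatic Euler system, the global energy balance ∂t ( Σ_{α=1}^N E_α ) + ∂x ( Σ_{α=1}^N u_α ( E_α + (g h /2) h_α ) ) = − Σ_{α=1}^{N−1} (1/2) ( u_{α+1} − u_α )² |G_{α+1/2}| holds; in particular the right-hand side is nonpositive. -/
/-!
Multiplying the momentum equation of layer `α` by `u_α` and subtracting `u_α²/2 - gη` times the
layer mass balance `∂t h_α + ∂x (h_α u_α) = G_{α+1/2} - G_{α-1/2}` gives the energy balance of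
the layer, with right-hand side
`(u_α u_{α+1/2} - u_α²/2 + gη) G_{α+1/2} - (u_α u_{α-1/2} - u_α²/2 + gη) G_{α-1/2}`.
Summed over `α` this telescopes, since `G_{1/2} = G_{N+1/2} = 0`, to
`Σ_{α<N} ((u_α - u_{α+1}) u_{α+1/2} - (u_α² - u_{α+1}²)/2) G_{α+1/2}`, and the upwind choice of
`u_{α+1/2}` makes each term equal to `-(u_{α+1} - u_α)² |G_{α+1/2}| / 2`.
-/

open Finset

section PartialDerivatives

variable {f : ℝ → ℝ → ℝ} {t x : ℝ}

theorem hasDerivAt_pt (hf : DifferentiableAt ℝ (fun p : ℝ × ℝ => f p.1 p.2) (t, x)) :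
    HasDerivAt (fun s => f s x) (pt f t x) t :=
  (DifferentiableAt.comp (f := fun s => (s, x)) t hf (by fun_prop)).hasDerivAt

theorem hasDerivAt_px (hf : DifferentiableAt ℝ (fun p : ℝ × ℝ => f p.1 p.2) (t, x)) :
    HasDerivAt (fun y => f t y) (px f t x) x :=
  (DifferentiableAt.comp (f := fun y => (t, y)) x hf (by fun_prop)).hasDerivAt

theorem pt_sum {ι : Type*} (s : Finset ι) (f : ι → ℝ → ℝ → ℝ)
    (hf : ∀ i ∈ s, DifferentiableAt ℝ (fun p : ℝ × ℝ => f i p.1 p.2) (t, x)) :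
    pt (fun t x => ∑ i ∈ s, f i t x) t x = ∑ i ∈ s, pt (f i) t x :=
  (HasDerivAt.fun_sum fun i hi => hasDerivAt_pt (hf i hi)).deriv

theorem px_sum {ι : Type*} (s : Finset ι) (f : ι → ℝ → ℝ → ℝ)
    (hf : ∀ i ∈ s, DifferentiableAt ℝ (fun p : ℝ × ℝ => f i p.1 p.2) (t, x)) :
    px (fun t x => ∑ i ∈ s, f i t x) t x = ∑ i ∈ s, px (f i) t x :=
  (HasDerivAt.fun_sum fun i hi => hasDerivAt_px (hf i hi)).deriv

end PartialDerivatives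

theorem layer_energy_identity (g c : ℝ) {h u : ℝ → ℝ → ℝ} {zb : ℝ → ℝ} {t x : ℝ}
    (hh : DifferentiableAt ℝ (fun p : ℝ × ℝ => h p.1 p.2) (t, x))
    (hu : DifferentiableAt ℝ (fun p : ℝ × ℝ => u p.1 p.2) (t, x))
    (hzb : DifferentiableAt ℝ zb x) :
    pt (fun t x => c * h t x * u t x ^ 2 / 2 + g * (c * h t x) * (h t x / 2 + zb x)) t x
      + px (fun t x => u t x * (c * h t x * u t x ^ 2 / 2 + g * (c * h t x) * (h t x / 2 + zb x)
          + g * h t x / 2 * (c * h t x))) t x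
    = u t x * (pt (fun t x => c * h t x * u t x) t x
        + px (fun t x => c * h t x * u t x ^ 2 + g / 2 * (c * h t x) * h t x) t x
        + g * (c * h t x) * deriv zb x)
      - (u t x ^ 2 / 2 - g * (h t x + zb x))
        * (pt (fun t x => c * h t x) t x + px (fun t x => c * h t x * u t x) t x) := by
  have ht := hasDerivAt_pt hh
  have hx := hasDerivAt_px hh
  have ut := hasDerivAt_pt hu
  have ux := hasDerivAt_px hu
  have cht := ht.const_mul c
  have chx := hx.const_mul c
  simp only [pt, px]
  rw [(((cht.fun_mul (ut.fun_pow 2)).div_const 2).fun_add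
        ((cht.const_mul g).fun_mul ((ht.div_const 2).add_const (zb x)))).deriv,
    (ux.fun_mul ((((chx.fun_mul (ux.fun_pow 2)).div_const 2).fun_add
        ((chx.const_mul g).fun_mul ((hx.div_const 2).fun_add hzb.hasDerivAt))).fun_add
        (((hx.const_mul g).div_const 2).fun_mul chx))).deriv,
    (cht.fun_mul ut).deriv,
    ((chx.fun_mul (ux.fun_pow 2)).fun_add ((chx.const_mul (g / 2)).fun_mul hx)).deriv,
    cht.deriv,
    (chx.fun_mul ux).deriv]
  ring

theorem sum_Icc_telescope (a b G : ℕ → ℝ) (N : ℕ) (hG0 : G 0 = 0) (hGN : G N = 0) :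
    ∑ α ∈ Icc 1 N, (a α * G α - b α * G (α - 1))
      = ∑ α ∈ Icc 1 (N - 1), (a α - b (α + 1)) * G α := by
  cases N with
  | zero => simp
  | succ n =>
    have hshift : ∑ α ∈ Icc 1 (n + 1), b α * G (α - 1) = ∑ α ∈ Icc 1 n, b (α + 1) * G α := by
      rw [show Icc 1 (n + 1) = (Icc 0 n).map (addRightEmbedding 1) by simp, sum_map,
        ← insert_Icc_add_one_left_eq_Icc (Nat.zero_le n), sum_insert (by simp)]
      simp [hG0]
    rw [sum_sub_distrib, sum_Icc_succ_top (by omega), hGN, mul_zero, add_zero, hshift,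
      Nat.add_sub_cancel, ← sum_sub_distrib]
    simp only [sub_mul]

theorem upwind_exchange_eq_neg_dissipation (a b G : ℝ) :
    (a - b) * (if G ≤ 0 then a else b) * G - (a ^ 2 - b ^ 2) / 2 * G
      = -(1 / 2 * (b - a) ^ 2 * |G|) := by
  split_ifs with hG
  · rw [abs_of_nonpos hG]; ring
  · rw [abs_of_pos (not_le.mp hG)]; ring

theorem global_energy_balance_general
    (g : ℝ)
    (N : ℕ)
    (l : ℕ → ℝ)
    (zb : ℝ → ℝ) (hzb : ContDiff ℝ 1 zb)
    (h : ℝ → ℝ → ℝ) (u : ℕ → ℝ → ℝ → ℝ)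
    (hhC1 : ContDiff ℝ 1 (fun p : ℝ × ℝ => h p.1 p.2))
    (huC1 : ∀ α ∈ Icc 1 N, ContDiff ℝ 1 (fun p : ℝ × ℝ => u α p.1 p.2))
    (hlay : ℕ → ℝ → ℝ → ℝ) (hhlay : ∀ (α : ℕ) (t x : ℝ), hlay α t x = l α * h t x)
    (G : ℕ → ℝ → ℝ → ℝ)
    (hG : ∀ (α : ℕ) (t x : ℝ), G α t x =
      ∑ j ∈ Icc 1 α, (pt (hlay j) t x + px (fun t x => hlay j t x * u j t x) t x))
    (hGN : ∀ t x, G N t x = 0)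
    (uint : ℕ → ℝ → ℝ → ℝ)
    (huint : ∀ (α : ℕ) (t x : ℝ),
      uint α t x = if G α t x ≤ 0 then u α t x else u (α + 1) t x)
    (E : ℕ → ℝ → ℝ → ℝ)
    (hE : ∀ (α : ℕ) (t x : ℝ), E α t x =
      hlay α t x * (u α t x) ^ 2 / 2 + g * hlay α t x * (h t x / 2 + zb x))
    (mom : ∀ α ∈ Icc 1 N, ∀ t x : ℝ,
      pt (fun t x => hlay α t x * u α t x) t x
        + px (fun t x => hlay α t x * (u α t x) ^ 2 + g / 2 * hlay α t x * h t x) t x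
      = -(g * hlay α t x * deriv zb x)
        + uint α t x * G α t x - uint (α - 1) t x * G (α - 1) t x) :
    ∀ t x : ℝ,
      pt (fun t x => ∑ α ∈ Icc 1 N, E α t x) t x
        + px (fun t x =>
            ∑ α ∈ Icc 1 N, u α t x * (E α t x + g * h t x / 2 * hlay α t x)) t x
      = -∑ α ∈ Icc 1 (N - 1),
            (1 / 2) * (u (α + 1) t x - u α t x) ^ 2 * |G α t x| ∧
      -∑ α ∈ Icc 1 (N - 1),
            (1 / 2) * (u (α + 1) t x - u α t x) ^ 2 * |G α t x| ≤ 0 := by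
  intro t x
  obtain rfl : hlay = fun α t x => l α * h t x := by ext; exact hhlay ..
  obtain rfl : E = fun α t x =>
      l α * h t x * u α t x ^ 2 / 2 + g * (l α * h t x) * (h t x / 2 + zb x) := by
    ext; exact hE ..
  have hh : Differentiable ℝ (fun p : ℝ × ℝ => h p.1 p.2) := hhC1.differentiable one_ne_zero
  have hu : ∀ α ∈ Icc 1 N, Differentiable ℝ (fun p : ℝ × ℝ => u α p.1 p.2) :=
    fun α hα => (huC1 α hα).differentiable one_ne_zero
  have hzb_diff : Differentiable ℝ zb := hzb.differentiable one_ne_zero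
  have mass_exchange : ∀ α ∈ Icc 1 N, pt (fun t x => l α * h t x) t x
      + px (fun t x => l α * h t x * u α t x) t x = G α t x - G (α - 1) t x := by
    intro α hα
    obtain ⟨β, rfl⟩ : ∃ β, α = β + 1 := Nat.exists_eq_add_one.mpr (mem_Icc.mp hα).1
    rw [hG, hG, sum_Icc_succ_top (by omega), Nat.add_sub_cancel, add_sub_cancel_left]
  refine ⟨?_, neg_nonpos.mpr (sum_nonneg fun α _ => by positivity)⟩
  rw [pt_sum _ _ fun α hα => by have := hu α hα; fun_prop,
    px_sum _ _ fun α hα => by have := hu α hα; fun_prop, ← sum_add_distrib]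
  calc _ = ∑ α ∈ Icc 1 N,
        ((u α t x * uint α t x - (u α t x ^ 2 / 2 - g * (h t x + zb x))) * G α t x
          - (u α t x * uint (α - 1) t x - (u α t x ^ 2 / 2 - g * (h t x + zb x)))
            * G (α - 1) t x) := by
        refine sum_congr rfl fun α hα => ?_
        rw [layer_energy_identity g (l α) (hh _) (hu α hα _) (hzb_diff x), mass_exchange α hα]
        linear_combination u α t x * mom α hα t x
    _ = _ := sum_Icc_telescope _ _ (G · t x) N (by simp [hG]) (hGN t x)
    _ = _ := by
        rw [← sum_neg_distrib]
        refine sum_congr rfl fun α _ => ?_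
        rw [Nat.add_sub_cancel, huint, ← upwind_exchange_eq_neg_dissipation]
        ring

/-- Global energy balance for smooth solutions of the layer-averaged hydrostatic Euler
system:
`∂t(Σ_α E_α) + ∂x(Σ_α u_α(E_α + (gh/2)h_α))
   = −Σ_{α=1}^{N−1} (1/2)(u_{α+1} − u_α)² |G_{α+1/2}|`,
and in particular the right-hand side is nonpositive. Here `h_α = l_α h`,
`E_α = h_α u_α²/2 + g h_α (h/2 + z_b)`, `G_{α+1/2} = Σ_{j≤α}(∂t h_j + ∂x(h_j u_j))`
(index `α` stands for interface `α+1/2`), and `u_{α+1/2}` is the upwinded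
interface velocity. -/
theorem global_energy_balance
    (g : ℝ) (hg : 0 < g)
    (N : ℕ) (hN : 1 ≤ N)
    (l : ℕ → ℝ) (hl : ∀ α ∈ Icc 1 N, 0 < l α)
    (hlsum : ∑ α ∈ Icc 1 N, l α = 1)
    (zb : ℝ → ℝ) (hzb : ContDiff ℝ 1 zb)
    (h : ℝ → ℝ → ℝ) (u : ℕ → ℝ → ℝ → ℝ)
    (hhC1 : ContDiff ℝ 1 (fun p : ℝ × ℝ => h p.1 p.2))
    (hhnn : ∀ t x, 0 ≤ h t x)
    (huC1 : ∀ α ∈ Icc 1 N, ContDiff ℝ 1 (fun p : ℝ × ℝ => u α p.1 p.2))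
    (hlay : ℕ → ℝ → ℝ → ℝ) (hhlay : ∀ (α : ℕ) (t x : ℝ), hlay α t x = l α * h t x)
    (G : ℕ → ℝ → ℝ → ℝ)
    (hG : ∀ (α : ℕ) (t x : ℝ), G α t x =
      ∑ j ∈ Icc 1 α, (pt (hlay j) t x + px (fun t x => hlay j t x * u j t x) t x))
    (hGN : ∀ t x, G N t x = 0)
    (uint : ℕ → ℝ → ℝ → ℝ)
    (huint : ∀ (α : ℕ) (t x : ℝ),
      uint α t x = if G α t x ≤ 0 then u α t x else u (α + 1) t x)
    (E : ℕ → ℝ → ℝ → ℝ)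
    (hE : ∀ (α : ℕ) (t x : ℝ), E α t x =
      hlay α t x * (u α t x) ^ 2 / 2 + g * hlay α t x * (h t x / 2 + zb x))
    (mass : ∀ t x,
      pt h t x + ∑ α ∈ Icc 1 N, px (fun t x => hlay α t x * u α t x) t x = 0)
    (mom : ∀ α ∈ Icc 1 N, ∀ t x : ℝ,
      pt (fun t x => hlay α t x * u α t x) t x
        + px (fun t x => hlay α t x * (u α t x) ^ 2 + g / 2 * hlay α t x * h t x) t x
      = -(g * hlay α t x * deriv zb x)
        + uint α t x * G α t x - uint (α - 1) t x * G (α - 1) t x) :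
    ∀ t x : ℝ,
      pt (fun t x => ∑ α ∈ Icc 1 N, E α t x) t x
        + px (fun t x =>
            ∑ α ∈ Icc 1 N, u α t x * (E α t x + g * h t x / 2 * hlay α t x)) t x
      = -∑ α ∈ Icc 1 (N - 1),
            (1 / 2) * (u (α + 1) t x - u α t x) ^ 2 * |G α t x| ∧
      -∑ α ∈ Icc 1 (N - 1),
            (1 / 2) * (u (α + 1) t x - u α t x) ^ 2 * |G α t x| ≤ 0 :=
  global_energy_balance_general g N l zb hzb h u hhC1 huC1 hlay hhlay G hG hGN uint huint E hE mom
end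

section
/- Smooth solutions of the layer-averaged hydrostatic Euler system satisfy the global macroscopic energy inequality ∂t ( Σ_{α=1}^N E_α ) + ∂x ( Σ_{α=1}^N u_α ( E_α + (g h /2) h_α ) ) ≤ − (g²π²/6) Σ_{α=1}^{N−1} ( |G_{α+1/2}| / h ) ∫_ℝ ( M̄_{α+1} + 2 M̄_α ) ( M̄_{α+1} − M̄_α )² dξ, where M̄_α(t,x,ξ) = M̄(h(t,x), u_α(t,x), ξ). -/
set_option maxHeartbeats 2000000


open Finset MeasureTheory

/-- The kinetic Maxwellian `M̄(h,u,ξ) = (1/(gπ))·max(2gh − (ξ−u)², 0)^{1/2}`. -/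
noncomputable def Mbar (g h u ξ : ℝ) : ℝ :=
  Real.sqrt (max (2 * g * h - (ξ - u) ^ 2) 0) / (g * Real.pi)

open Real in
lemma Kint (r d : ℝ) (hr : 0 < r) :
    ∫ s : ℝ, Real.sqrt (max (r ^ 2 - s ^ 2) 0) * (r ^ 2 - (s - d) ^ 2)
      = 3 * π / 8 * r ^ 4 - π / 2 * r ^ 2 * d ^ 2 := by
  set K : ℝ → ℝ := fun s => Real.sqrt (max (r ^ 2 - s ^ 2) 0) * (r ^ 2 - (s - d) ^ 2) with hK
  have hKcont : Continuous K := by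
    apply Continuous.mul
    · exact Real.continuous_sqrt.comp ((continuous_const.sub (continuous_pow 2)).max continuous_const)
    · fun_prop
  have hsupp : Function.support K ⊆ Set.Ioc (-r) r := by
    intro s hs
    by_contra hmem
    apply hs
    have h1 : r ^ 2 - s ^ 2 ≤ 0 := by
      simp only [Set.mem_Ioc, not_and_or, not_lt, not_le] at hmem
      rcases hmem with h | h
      · nlinarith
      · nlinarith
    have : max (r ^ 2 - s ^ 2) 0 = 0 := max_eq_right h1
    simp [hK, this]
  rw [← intervalIntegral.integral_eq_integral_of_support_subset hsupp]
  have hle : -(π/2) ≤ π/2 := by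
    have := Real.pi_pos; linarith
  have hderiv : ∀ θ ∈ Set.uIcc (-(π/2)) (π/2), HasDerivAt (fun θ => r * Real.sin θ) (r * Real.cos θ) θ := by
    intro θ _
    simpa using (Real.hasDerivAt_sin θ).const_mul r
  have hcont : ContinuousOn (fun θ => r * Real.cos θ) (Set.uIcc (-(π/2)) (π/2)) :=
    (continuous_const.mul Real.continuous_cos).continuousOn
  have hsub := intervalIntegral.integral_comp_smul_deriv hderiv hcont hKcont
  have ha : r * Real.sin (-(π/2)) = -r := by simp
  have hb : r * Real.sin (π/2) = r := by simp
  rw [ha, hb] at hsub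
  rw [← hsub]
  have hcongr : Set.EqOn (fun θ => (r * Real.cos θ) • (K ∘ fun θ => r * Real.sin θ) θ)
      (fun θ => r ^ 4 * Real.cos θ ^ 4 + 2 * r ^ 3 * d * (Real.sin θ * Real.cos θ ^ 2)
          - r ^ 2 * d ^ 2 * Real.cos θ ^ 2) (Set.uIcc (-(π/2)) (π/2)) := by
    intro θ hθ
    have hθ' : θ ∈ Set.Icc (-(π/2)) (π/2) := by rwa [Set.uIcc_of_le hle] at hθ
    have hcos : 0 ≤ Real.cos θ := Real.cos_nonneg_of_mem_Icc hθ'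
    have h1 : r ^ 2 - (r * Real.sin θ) ^ 2 = (r * Real.cos θ) ^ 2 := by
      have := Real.sin_sq_add_cos_sq θ; nlinarith [this]
    have h2 : max (r ^ 2 - (r * Real.sin θ) ^ 2) 0 = (r * Real.cos θ) ^ 2 := by
      rw [h1]; exact max_eq_left (sq_nonneg _)
    simp only [Function.comp, hK, smul_eq_mul]
    rw [h2, Real.sqrt_sq (mul_nonneg hr.le hcos)]
    have := Real.sin_sq_add_cos_sq θ
    nlinarith [this]
  rw [intervalIntegral.integral_congr hcongr]
  have hint1 : IntervalIntegrable (fun θ => r ^ 4 * Real.cos θ ^ 4) volume (-(π/2)) (π/2) := by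
    apply Continuous.intervalIntegrable; fun_prop
  have hint2 : IntervalIntegrable (fun θ => 2 * r ^ 3 * d * (Real.sin θ * Real.cos θ ^ 2)) volume (-(π/2)) (π/2) := by
    apply Continuous.intervalIntegrable; fun_prop
  have hint3 : IntervalIntegrable (fun θ => r ^ 2 * d ^ 2 * Real.cos θ ^ 2) volume (-(π/2)) (π/2) := by
    apply Continuous.intervalIntegrable; fun_prop
  rw [intervalIntegral.integral_sub (hint1.add hint2) hint3,
    intervalIntegral.integral_add hint1 hint2,
    intervalIntegral.integral_const_mul, intervalIntegral.integral_const_mul,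
    intervalIntegral.integral_const_mul]
  have h4 : (∫ θ in (-(π/2))..(π/2), Real.cos θ ^ 4) = 3 * π / 8 := by
    have := @integral_cos_pow (-(π/2)) (π/2) 2
    simp [Real.cos_pi_div_two] at this
    rw [this]
    ring
  have hsc : (∫ θ in (-(π/2))..(π/2), Real.sin θ * Real.cos θ ^ 2) = 0 := by
    simp [integral_sin_mul_cos_sq, Real.cos_pi_div_two]
  have hc2 : (∫ θ in (-(π/2))..(π/2), Real.cos θ ^ 2) = π / 2 := by
    simp [integral_cos_sq, Real.cos_pi_div_two]
  rw [h4, hsc, hc2]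
  ring

open Real in
lemma kinetic_bound (g H u u' : ℝ) (hg : 0 < g) (hH : 0 < H) :
    g ^ 2 * Real.pi ^ 2 / 6 *
      ∫ ξ : ℝ, (Mbar g H u' ξ + 2 * Mbar g H u ξ) * (Mbar g H u' ξ - Mbar g H u ξ) ^ 2
      ≤ H * (u' - u) ^ 2 / 2 := by
  have hπ := Real.pi_pos
  set r := Real.sqrt (2 * g * H) with hrdef
  have hr : 0 < r := Real.sqrt_pos.2 (by positivity)
  have hr2 : r ^ 2 = 2 * g * H := Real.sq_sqrt (by positivity)
  set φ : ℝ → ℝ → ℝ := fun c ξ => Real.sqrt (max (r ^ 2 - (ξ - c) ^ 2) 0) with hφdef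
  have hM : ∀ c ξ, Mbar g H c ξ = φ c ξ / (g * π) := by
    intro c ξ; rw [Mbar, hφdef]; rw [hr2]
  have hφcont : ∀ c, Continuous (φ c) := by
    intro c
    exact Real.continuous_sqrt.comp ((continuous_const.sub (by fun_prop)).max continuous_const)
  have hφnn : ∀ c ξ, 0 ≤ φ c ξ := fun c ξ => Real.sqrt_nonneg _
  have hφsq : ∀ c ξ, φ c ξ ^ 2 = max (r ^ 2 - (ξ - c) ^ 2) 0 := by
    intro c ξ; exact Real.sq_sqrt (le_max_right _ _)
  have hφ0 : ∀ c ξ, r ^ 2 - (ξ - c) ^ 2 ≤ 0 → φ c ξ = 0 := by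
    intro c ξ hle
    simp [hφdef, max_eq_right hle]
  have hφout : ∀ c ξ, ξ ∉ Set.Icc (c - r) (c + r) → φ c ξ = 0 := by
    intro c ξ hξ
    apply hφ0
    simp only [Set.mem_Icc, not_and_or, not_le] at hξ
    rcases hξ with h | h <;> nlinarith
  have hφcs : ∀ c, HasCompactSupport (φ c) := fun c =>
    HasCompactSupport.intro isCompact_Icc (hφout c)
  have hφcube : ∀ c ξ, φ c ξ ^ 3 = φ c ξ * (r ^ 2 - (ξ - c) ^ 2) := by
    intro c ξ
    rcases le_or_gt (r ^ 2 - (ξ - c) ^ 2) 0 with hle | hlt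
    · rw [hφ0 c ξ hle]; ring
    · have : φ c ξ ^ 2 = r ^ 2 - (ξ - c) ^ 2 := by rw [hφsq, max_eq_left hlt.le]
      calc φ c ξ ^ 3 = φ c ξ * φ c ξ ^ 2 := by ring
      _ = _ := by rw [this]
  -- integrable functions
  have int3 : ∀ c, Integrable (fun ξ => φ c ξ ^ 3) := by
    intro c
    refine Continuous.integrable_of_hasCompactSupport (by fun_prop) ?_
    exact ((hφcs c).comp_left (g := fun y : ℝ => y ^ 3) (by simp) : _)
  have intmix : Integrable (fun ξ => φ u' ξ * φ u ξ ^ 2) := by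
    refine Continuous.integrable_of_hasCompactSupport (by fun_prop) ?_
    refine HasCompactSupport.intro (isCompact_Icc (a := u' - r) (b := u' + r)) ?_
    intro ξ hξ; rw [hφout u' ξ hξ]; ring
  have intmin : Integrable (fun ξ => φ u' ξ * (r ^ 2 - (ξ - u) ^ 2)) := by
    refine Continuous.integrable_of_hasCompactSupport (by fun_prop) ?_
    refine HasCompactSupport.intro (isCompact_Icc (a := u' - r) (b := u' + r)) ?_
    intro ξ hξ; rw [hφout u' ξ hξ]; ring
  -- values of the integrals
  have I3 : ∀ c, (∫ ξ : ℝ, φ c ξ ^ 3) = 3 * π / 8 * r ^ 4 := by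
    intro c
    have : (fun ξ => φ c ξ ^ 3)
        = fun ξ => Real.sqrt (max (r ^ 2 - (ξ - c) ^ 2) 0) * (r ^ 2 - ((ξ - c) - 0) ^ 2) := by
      funext ξ; rw [hφcube]; simp [hφdef]
    rw [this]
    rw [integral_sub_right_eq_self
      (fun s => Real.sqrt (max (r ^ 2 - s ^ 2) 0) * (r ^ 2 - (s - 0) ^ 2)) c]
    rw [Kint r 0 hr]; ring
  have Imin : (∫ ξ : ℝ, φ u' ξ * (r ^ 2 - (ξ - u) ^ 2))
      = 3 * π / 8 * r ^ 4 - π / 2 * r ^ 2 * (u' - u) ^ 2 := by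
    have : (fun ξ => φ u' ξ * (r ^ 2 - (ξ - u) ^ 2))
        = fun ξ => Real.sqrt (max (r ^ 2 - (ξ - u') ^ 2) 0) * (r ^ 2 - ((ξ - u') - (u - u')) ^ 2) := by
      funext ξ; rw [hφdef]; ring_nf
    rw [this]
    rw [integral_sub_right_eq_self
      (fun s => Real.sqrt (max (r ^ 2 - s ^ 2) 0) * (r ^ 2 - (s - (u - u')) ^ 2)) u']
    rw [Kint r (u - u') hr]; ring
  -- lower bound for the mixed integral
  have Jge : (∫ ξ : ℝ, φ u' ξ * φ u ξ ^ 2) ≥ 3 * π / 8 * r ^ 4 - π / 2 * r ^ 2 * (u' - u) ^ 2 := by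
    rw [← Imin]
    apply integral_mono intmin intmix
    intro ξ
    have h1 : r ^ 2 - (ξ - u) ^ 2 ≤ φ u ξ ^ 2 := by rw [hφsq]; exact le_max_left _ _
    exact mul_le_mul_of_nonneg_left h1 (hφnn u' ξ)
  -- rewrite the main integrand
  have hmain : (∫ ξ : ℝ, (Mbar g H u' ξ + 2 * Mbar g H u ξ) * (Mbar g H u' ξ - Mbar g H u ξ) ^ 2)
      = (1 / (g * π) ^ 3) * ∫ ξ : ℝ, (φ u' ξ ^ 3 + 2 * φ u ξ ^ 3 - 3 * (φ u' ξ * φ u ξ ^ 2)) := by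
    rw [← integral_const_mul]
    congr 1
    funext ξ
    rw [hM, hM]
    field_simp
    ring
  rw [hmain]
  have hsplit : (∫ ξ : ℝ, (φ u' ξ ^ 3 + 2 * φ u ξ ^ 3 - 3 * (φ u' ξ * φ u ξ ^ 2)))
      = (∫ ξ : ℝ, φ u' ξ ^ 3) + 2 * (∫ ξ : ℝ, φ u ξ ^ 3) - 3 * ∫ ξ : ℝ, φ u' ξ * φ u ξ ^ 2 := by
    have hfadd : Integrable (fun ξ => φ u' ξ ^ 3 + 2 * φ u ξ ^ 3) := by
      exact (int3 u').add ((int3 u).const_mul 2)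
    rw [integral_sub hfadd (intmix.const_mul 3)]
    rw [integral_add (int3 u') ((int3 u).const_mul 2), integral_const_mul, integral_const_mul]
  rw [hsplit, I3, I3]
  have hbound : (3 * π / 8 * r ^ 4) + 2 * (3 * π / 8 * r ^ 4) - 3 * ∫ ξ : ℝ, φ u' ξ * φ u ξ ^ 2
      ≤ 3 * (π / 2 * r ^ 2 * (u' - u) ^ 2) := by
    nlinarith [Jge]
  have hpos : (0:ℝ) < (g * π) ^ 3 := by positivity
  calc g ^ 2 * π ^ 2 / 6 * (1 / (g * π) ^ 3 *
        ((3 * π / 8 * r ^ 4) + 2 * (3 * π / 8 * r ^ 4) - 3 * ∫ ξ : ℝ, φ u' ξ * φ u ξ ^ 2))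
      ≤ g ^ 2 * π ^ 2 / 6 * (1 / (g * π) ^ 3 * (3 * (π / 2 * r ^ 2 * (u' - u) ^ 2))) := by
        apply mul_le_mul_of_nonneg_left _ (by positivity)
        apply mul_le_mul_of_nonneg_left hbound (by positivity)
    _ = H * (u' - u) ^ 2 / 2 := by
        rw [hr2]; field_simp; ring

lemma hasDerivAt_slice1 {f : ℝ → ℝ → ℝ} (hf : ContDiff ℝ 1 (fun p : ℝ × ℝ => f p.1 p.2))
    (t x : ℝ) : HasDerivAt (fun s => f s x) (pt f t x) t := by
  have hd : DifferentiableAt ℝ (fun s => f s x) t := by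
    have h1 : DifferentiableAt ℝ (fun p : ℝ × ℝ => f p.1 p.2) (t, x) :=
      (hf.differentiable one_ne_zero).differentiableAt
    have h2 : DifferentiableAt ℝ (fun s : ℝ => (s, x)) t :=
      differentiableAt_id.prodMk (differentiableAt_const x)
    exact h1.comp t h2
  simpa [pt] using hd.hasDerivAt

lemma hasDerivAt_slice2 {f : ℝ → ℝ → ℝ} (hf : ContDiff ℝ 1 (fun p : ℝ × ℝ => f p.1 p.2))
    (t x : ℝ) : HasDerivAt (fun y => f t y) (px f t x) x := by
  have hd : DifferentiableAt ℝ (fun y => f t y) x := by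
    have h1 : DifferentiableAt ℝ (fun p : ℝ × ℝ => f p.1 p.2) (t, x) :=
      (hf.differentiable one_ne_zero).differentiableAt
    have h2 : DifferentiableAt ℝ (fun y : ℝ => (t, y)) x :=
      (differentiableAt_const t).prodMk differentiableAt_id
    exact h1.comp x h2
  simpa [px] using hd.hasDerivAt


/-- Global macroscopic energy inequality obtained from the kinetic level: smooth
solutions of the layer-averaged hydrostatic Euler system satisfy
`∂t(Σ_α E_α) + ∂x(Σ_α u_α(E_α + (gh/2)h_α))
  ≤ −(g²π²/6) Σ_{α=1}^{N−1} (|G_{α+1/2}|/h) ∫_ℝ (M̄_{α+1} + 2M̄_α)(M̄_{α+1} − M̄_α)² dξ`,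
where `M̄_α(t,x,ξ) = M̄(h(t,x), u_α(t,x), ξ)` (index `α` of `G` stands for the
interface `α+1/2`). -/
theorem global_macroscopic_energy_inequality
    (g : ℝ) (hg : 0 < g)
    (N : ℕ) (hN : 1 ≤ N)
    (l : ℕ → ℝ) (hl : ∀ α ∈ Icc 1 N, 0 < l α)
    (hlsum : ∑ α ∈ Icc 1 N, l α = 1)
    (zb : ℝ → ℝ) (hzb : ContDiff ℝ 1 zb)
    (h : ℝ → ℝ → ℝ) (u : ℕ → ℝ → ℝ → ℝ)
    (hhC1 : ContDiff ℝ 1 (fun p : ℝ × ℝ => h p.1 p.2))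
    (hhpos : ∀ t x, 0 < h t x)
    (huC1 : ∀ α ∈ Icc 1 N, ContDiff ℝ 1 (fun p : ℝ × ℝ => u α p.1 p.2))
    (hlay : ℕ → ℝ → ℝ → ℝ) (hhlay : ∀ (α : ℕ) (t x : ℝ), hlay α t x = l α * h t x)
    (G : ℕ → ℝ → ℝ → ℝ)
    (hG : ∀ (α : ℕ) (t x : ℝ), G α t x =
      ∑ j ∈ Icc 1 α, (pt (hlay j) t x + px (fun t x => hlay j t x * u j t x) t x))
    (hGN : ∀ t x, G N t x = 0)
    (uint : ℕ → ℝ → ℝ → ℝ)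
    (huint : ∀ (α : ℕ) (t x : ℝ),
      uint α t x = if G α t x ≤ 0 then u α t x else u (α + 1) t x)
    (E : ℕ → ℝ → ℝ → ℝ)
    (hE : ∀ (α : ℕ) (t x : ℝ), E α t x =
      hlay α t x * (u α t x) ^ 2 / 2 + g * hlay α t x * (h t x / 2 + zb x))
    (mass : ∀ t x,
      pt h t x + ∑ α ∈ Icc 1 N, px (fun t x => hlay α t x * u α t x) t x = 0)
    (mom : ∀ α ∈ Icc 1 N, ∀ t x : ℝ,
      pt (fun t x => hlay α t x * u α t x) t x
        + px (fun t x => hlay α t x * (u α t x) ^ 2 + g / 2 * hlay α t x * h t x) t x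
      = -(g * hlay α t x * deriv zb x)
        + uint α t x * G α t x - uint (α - 1) t x * G (α - 1) t x) :
    ∀ t x : ℝ,
      pt (fun t x => ∑ α ∈ Icc 1 N, E α t x) t x
        + px (fun t x =>
            ∑ α ∈ Icc 1 N, u α t x * (E α t x + g * h t x / 2 * hlay α t x)) t x
      ≤ -(g ^ 2 * Real.pi ^ 2 / 6) *
          ∑ α ∈ Icc 1 (N - 1), (|G α t x| / h t x) *
            ∫ ξ : ℝ,
              (Mbar g (h t x) (u (α + 1) t x) ξ + 2 * Mbar g (h t x) (u α t x) ξ)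
                * (Mbar g (h t x) (u (α + 1) t x) ξ
                    - Mbar g (h t x) (u α t x) ξ) ^ 2 := by

  intro t x
  obtain ⟨m, rfl⟩ : ∃ m, N = m + 1 := ⟨N - 1, by omega⟩
  simp only [Nat.add_sub_cancel]
  -- slice derivatives
  have Dht : HasDerivAt (fun s => h s x) (pt h t x) t := hasDerivAt_slice1 hhC1 t x
  have Dhx : HasDerivAt (fun y => h t y) (px h t x) x := hasDerivAt_slice2 hhC1 t x
  have Dut : ∀ α ∈ Icc 1 (m + 1), HasDerivAt (fun s => u α s x) (pt (u α) t x) t :=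
    fun α hα => hasDerivAt_slice1 (huC1 α hα) t x
  have Dux : ∀ α ∈ Icc 1 (m + 1), HasDerivAt (fun y => u α t y) (px (u α) t x) x :=
    fun α hα => hasDerivAt_slice2 (huC1 α hα) t x
  have Dzb : HasDerivAt zb (deriv zb x) x := ((hzb.differentiable one_ne_zero) x).hasDerivAt
  -- rewrite of E slices
  have hEfun1 : ∀ α : ℕ, (fun s => E α s x)
      = fun s => l α * h s x * (u α s x) ^ 2 / 2 + g * (l α * h s x) * (h s x / 2 + zb x) := by
    intro α; funext s; rw [hE, hhlay]
  have hEfun2 : ∀ α : ℕ, (fun y => u α t y * (E α t y + g * h t y / 2 * hlay α t y))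
      = fun y => u α t y * (l α * h t y * (u α t y) ^ 2 / 2
          + g * (l α * h t y) * (h t y / 2 + zb y) + g * h t y / 2 * (l α * h t y)) := by
    intro α; funext y; rw [hE, hhlay]
  -- time derivative of each energy slice
  have tEd : ∀ α ∈ Icc 1 (m + 1), HasDerivAt (fun s => E α s x)
      (l α * (pt h t x * (u α t x) ^ 2 / 2 + h t x * u α t x * pt (u α) t x
        + g * pt h t x * (h t x / 2 + zb x) + g * h t x * pt h t x / 2)) t := by
    intro α hα
    rw [hEfun1 α]
    have c1 := ((Dht.const_mul (l α)).mul ((Dut α hα).pow 2)).div_const 2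
    have c2 := ((Dht.const_mul (l α)).const_mul g).mul ((Dht.div_const 2).add_const (zb x))
    have := c1.add c2
    refine this.congr_deriv ?_
    simp only [Pi.pow_apply, Pi.add_apply, Pi.mul_apply]
    ring
  -- space derivative of each flux slice
  have xFd : ∀ α ∈ Icc 1 (m + 1), HasDerivAt
      (fun y => u α t y * (E α t y + g * h t y / 2 * hlay α t y))
      (l α * (px h t x * (u α t x) ^ 3 / 2 + 3 / 2 * h t x * (u α t x) ^ 2 * px (u α) t x
        + g * (px h t x * u α t x + h t x * px (u α) t x) * (h t x + zb x)
        + g * h t x * u α t x * (px h t x + deriv zb x))) x := by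
    intro α hα
    rw [hEfun2 α]
    have i1 := ((Dhx.const_mul (l α)).mul ((Dux α hα).pow 2)).div_const 2
    have i2 := ((Dhx.const_mul (l α)).const_mul g).mul ((Dhx.div_const 2).add Dzb)
    have i3 := ((Dhx.const_mul g).div_const 2).mul (Dhx.const_mul (l α))
    have := (Dux α hα).mul ((i1.add i2).add i3)
    refine this.congr_deriv ?_
    simp only [Pi.pow_apply, Pi.add_apply, Pi.mul_apply]
    ring
  -- scalar form of the momentum equation pieces
  have ptHU : ∀ α ∈ Icc 1 (m + 1), pt (fun t x => hlay α t x * u α t x) t x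
      = l α * (pt h t x * u α t x + h t x * pt (u α) t x) := by
    intro α hα
    have hfun : (fun s => hlay α s x * u α s x) = fun s => l α * h s x * u α s x := by
      funext s; rw [hhlay]
    have hd : HasDerivAt (fun s => l α * h s x * u α s x) _ t := (Dht.const_mul (l α)).mul (Dut α hα)
    have : pt (fun t x => hlay α t x * u α t x) t x
        = deriv (fun s => hlay α s x * u α s x) t := rfl
    rw [this, hfun, hd.deriv]
    ring
  have pxHU : ∀ α ∈ Icc 1 (m + 1), px (fun t x => hlay α t x * u α t x) t x
      = l α * (px h t x * u α t x + h t x * px (u α) t x) := by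
    intro α hα
    have hfun : (fun y => hlay α t y * u α t y) = fun y => l α * h t y * u α t y := by
      funext y; rw [hhlay]
    have hd : HasDerivAt (fun y => l α * h t y * u α t y) _ x := (Dhx.const_mul (l α)).mul (Dux α hα)
    have : px (fun t x => hlay α t x * u α t x) t x
        = deriv (fun y => hlay α t y * u α t y) x := rfl
    rw [this, hfun, hd.deriv]
    ring
  have ptH : ∀ α : ℕ, pt (hlay α) t x = l α * pt h t x := by
    intro α
    have hfun : (fun s => hlay α s x) = fun s => l α * h s x := by
      funext s; rw [hhlay]
    have hd := Dht.const_mul (l α)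
    have : pt (hlay α) t x = deriv (fun s => hlay α s x) t := rfl
    rw [this, hfun, hd.deriv]
  have pxMom : ∀ α ∈ Icc 1 (m + 1),
      px (fun t x => hlay α t x * (u α t x) ^ 2 + g / 2 * hlay α t x * h t x) t x
      = l α * (px h t x * (u α t x) ^ 2 + 2 * h t x * u α t x * px (u α) t x)
        + g * l α * h t x * px h t x := by
    intro α hα
    have hfun : (fun y => hlay α t y * (u α t y) ^ 2 + g / 2 * hlay α t y * h t y)
        = fun y => l α * h t y * (u α t y) ^ 2 + g / 2 * (l α * h t y) * h t y := by
      funext y; rw [hhlay]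
    have m1 := (Dhx.const_mul (l α)).mul ((Dux α hα).pow 2)
    have m2 := ((Dhx.const_mul (l α)).const_mul (g / 2)).mul Dhx
    have hd : HasDerivAt (fun y => l α * h t y * (u α t y) ^ 2 + g / 2 * (l α * h t y) * h t y) _ x := m1.add m2
    have : px (fun t x => hlay α t x * (u α t x) ^ 2 + g / 2 * hlay α t x * h t x) t x
        = deriv (fun y => hlay α t y * (u α t y) ^ 2 + g / 2 * hlay α t y * h t y) x := rfl
    rw [this, hfun, hd.deriv]
    simp only [Pi.pow_apply, Pi.add_apply, Pi.mul_apply]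
    ring
  -- momentum, scalar form
  have momS : ∀ α ∈ Icc 1 (m + 1),
      l α * (pt h t x * u α t x + h t x * pt (u α) t x)
        + (l α * (px h t x * (u α t x) ^ 2 + 2 * h t x * u α t x * px (u α) t x)
            + g * l α * h t x * px h t x)
      = -(g * (l α * h t x) * deriv zb x)
        + uint α t x * G α t x - uint (α - 1) t x * G (α - 1) t x := by
    intro α hα
    have hm := mom α hα t x
    rw [ptHU α hα, pxMom α hα, hhlay] at hm
    exact hm
  -- telescoping identity for G
  have GS : ∀ α ∈ Icc 1 (m + 1), G α t x - G (α - 1) t x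
      = l α * pt h t x + l α * (px h t x * u α t x + h t x * px (u α) t x) := by
    intro α hα
    have hα1 : 1 ≤ α := (mem_Icc.mp hα).1
    have hsucc : α = (α - 1) + 1 := by omega
    have hsum : G α t x = G (α - 1) t x
        + (pt (hlay α) t x + px (fun t x => hlay α t x * u α t x) t x) := by
      rw [hG α t x, hG (α - 1) t x]
      rw [hsucc]
      rw [Finset.sum_Icc_succ_top (by omega : 1 ≤ (α - 1) + 1)]
      rw [← hsucc]
    rw [hsum, ptH α, pxHU α hα]
    ring
  -- per-layer energy identity
  have layer : ∀ α ∈ Icc 1 (m + 1),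
      l α * (pt h t x * (u α t x) ^ 2 / 2 + h t x * u α t x * pt (u α) t x
        + g * pt h t x * (h t x / 2 + zb x) + g * h t x * pt h t x / 2)
      + l α * (px h t x * (u α t x) ^ 3 / 2 + 3 / 2 * h t x * (u α t x) ^ 2 * px (u α) t x
        + g * (px h t x * u α t x + h t x * px (u α) t x) * (h t x + zb x)
        + g * h t x * u α t x * (px h t x + deriv zb x))
      = G α t x * (g * (h t x + zb x) - (u α t x) ^ 2 / 2 + u α t x * uint α t x)
        - G (α - 1) t x * (g * (h t x + zb x) - (u α t x) ^ 2 / 2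
            + u α t x * uint (α - 1) t x) := by
    intro α hα
    have h1 := momS α hα
    have h2 := GS α hα
    linear_combination (u α t x) * h1 - (g * (h t x + zb x) - (u α t x) ^ 2 / 2) * h2
  -- LHS as a sum
  have hLHS : pt (fun t x => ∑ α ∈ Icc 1 (m + 1), E α t x) t x
      + px (fun t x => ∑ α ∈ Icc 1 (m + 1), u α t x * (E α t x + g * h t x / 2 * hlay α t x)) t x
      = ∑ α ∈ Icc 1 (m + 1),
        (l α * (pt h t x * (u α t x) ^ 2 / 2 + h t x * u α t x * pt (u α) t x
          + g * pt h t x * (h t x / 2 + zb x) + g * h t x * pt h t x / 2)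
        + l α * (px h t x * (u α t x) ^ 3 / 2 + 3 / 2 * h t x * (u α t x) ^ 2 * px (u α) t x
          + g * (px h t x * u α t x + h t x * px (u α) t x) * (h t x + zb x)
          + g * h t x * u α t x * (px h t x + deriv zb x))) := by
    have s1 : HasDerivAt (fun s => ∑ α ∈ Icc 1 (m + 1), E α s x)
        (∑ α ∈ Icc 1 (m + 1), l α * (pt h t x * (u α t x) ^ 2 / 2 + h t x * u α t x * pt (u α) t x
          + g * pt h t x * (h t x / 2 + zb x) + g * h t x * pt h t x / 2)) t :=
      HasDerivAt.fun_sum (fun α hα => tEd α hα)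
    have s2 : HasDerivAt (fun y => ∑ α ∈ Icc 1 (m + 1), u α t y * (E α t y + g * h t y / 2 * hlay α t y))
        (∑ α ∈ Icc 1 (m + 1), l α * (px h t x * (u α t x) ^ 3 / 2
          + 3 / 2 * h t x * (u α t x) ^ 2 * px (u α) t x
          + g * (px h t x * u α t x + h t x * px (u α) t x) * (h t x + zb x)
          + g * h t x * u α t x * (px h t x + deriv zb x))) x :=
      HasDerivAt.fun_sum (fun α hα => xFd α hα)
    have e1 : pt (fun t x => ∑ α ∈ Icc 1 (m + 1), E α t x) t x = _ := s1.deriv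
    have e2 : px (fun t x => ∑ α ∈ Icc 1 (m + 1), u α t x * (E α t x + g * h t x / 2 * hlay α t x)) t x
        = _ := s2.deriv
    rw [e1, e2, ← Finset.sum_add_distrib]
  rw [hLHS]
  -- reindex and telescope
  have hrange : ∀ (F : ℕ → ℝ) (n : ℕ), ∑ α ∈ Icc 1 n, F α = ∑ i ∈ range n, F (1 + i) := by
    intro F n
    rw [← Finset.Ico_add_one_right_eq_Icc, Finset.sum_Ico_eq_sum_range]
    simp
  have hG0 : G 0 t x = 0 := by rw [hG]; simp
  have t1 : ∑ α ∈ Icc 1 (m + 1),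
      (l α * (pt h t x * (u α t x) ^ 2 / 2 + h t x * u α t x * pt (u α) t x
          + g * pt h t x * (h t x / 2 + zb x) + g * h t x * pt h t x / 2)
        + l α * (px h t x * (u α t x) ^ 3 / 2 + 3 / 2 * h t x * (u α t x) ^ 2 * px (u α) t x
          + g * (px h t x * u α t x + h t x * px (u α) t x) * (h t x + zb x)
          + g * h t x * u α t x * (px h t x + deriv zb x)))
      = ∑ α ∈ Icc 1 (m + 1), (G (α) t x * (g * (h t x + zb x) - (u (α) t x) ^ 2 / 2 + u (α) t x * uint (α) t x) - (G ((α) - 1) t x * (g * (h t x + zb x) - (u (α) t x) ^ 2 / 2 + u (α) t x * uint ((α) - 1) t x))) := Finset.sum_congr rfl layer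
  have t2 : ∑ α ∈ Icc 1 (m + 1), (G (α) t x * (g * (h t x + zb x) - (u (α) t x) ^ 2 / 2 + u (α) t x * uint (α) t x) - (G ((α) - 1) t x * (g * (h t x + zb x) - (u (α) t x) ^ 2 / 2 + u (α) t x * uint ((α) - 1) t x)))
      = (∑ i ∈ range (m + 1), (G (1 + i) t x * (g * (h t x + zb x) - (u (1 + i) t x) ^ 2 / 2 + u (1 + i) t x * uint (1 + i) t x))) - ∑ i ∈ range (m + 1), (G ((1 + i) - 1) t x * (g * (h t x + zb x) - (u (1 + i) t x) ^ 2 / 2 + u (1 + i) t x * uint ((1 + i) - 1) t x)) := by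
    rw [hrange, Finset.sum_sub_distrib]
  have t3 : ∑ i ∈ range (m + 1), (G (1 + i) t x * (g * (h t x + zb x) - (u (1 + i) t x) ^ 2 / 2 + u (1 + i) t x * uint (1 + i) t x)) = ∑ i ∈ range m, (G (1 + i) t x * (g * (h t x + zb x) - (u (1 + i) t x) ^ 2 / 2 + u (1 + i) t x * uint (1 + i) t x)) := by
    rw [Finset.sum_range_succ]
    have hz : G (1 + m) t x = 0 := by rw [show 1 + m = m + 1 by omega]; exact hGN t x
    rw [hz]; ring
  have t4 : ∑ i ∈ range (m + 1), (G ((1 + i) - 1) t x * (g * (h t x + zb x) - (u (1 + i) t x) ^ 2 / 2 + u (1 + i) t x * uint ((1 + i) - 1) t x)) = ∑ i ∈ range m, (G ((1 + (i + 1)) - 1) t x * (g * (h t x + zb x) - (u (1 + (i + 1)) t x) ^ 2 / 2 + u (1 + (i + 1)) t x * uint ((1 + (i + 1)) - 1) t x)) := by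
    rw [Finset.sum_range_succ']
    norm_num [hG0]
  have t5 : (∑ i ∈ range m, (G (1 + i) t x * (g * (h t x + zb x) - (u (1 + i) t x) ^ 2 / 2 + u (1 + i) t x * uint (1 + i) t x))) - (∑ i ∈ range m, (G ((1 + (i + 1)) - 1) t x * (g * (h t x + zb x) - (u (1 + (i + 1)) t x) ^ 2 / 2 + u (1 + (i + 1)) t x * uint ((1 + (i + 1)) - 1) t x)))
      = ∑ i ∈ range m, (G (1 + i) t x * ((u (1 + i + 1) t x) ^ 2 / 2 - (u (1 + i) t x) ^ 2 / 2 + uint (1 + i) t x * (u (1 + i) t x - u (1 + i + 1) t x))) := by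
    rw [← Finset.sum_sub_distrib]
    apply Finset.sum_congr rfl
    intro i _
    have e1 : 1 + (i + 1) = 1 + i + 1 := by omega
    have e2 : 1 + (i + 1) - 1 = 1 + i := by omega
    have e3 : 1 + i - 1 + 1 = 1 + i := by omega
    rw [e2, e1]
    ring
  have tbound : ∑ i ∈ range m, (G (1 + i) t x * ((u (1 + i + 1) t x) ^ 2 / 2 - (u (1 + i) t x) ^ 2 / 2 + uint (1 + i) t x * (u (1 + i) t x - u (1 + i + 1) t x)))
      ≤ ∑ i ∈ range m, (-(g ^ 2 * Real.pi ^ 2 / 6) *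
          ((|G (1 + i) t x| / h t x) * (∫ ξ : ℝ, (Mbar g (h t x) (u (1 + i + 1) t x) ξ + 2 * Mbar g (h t x) (u (1 + i) t x) ξ) * (Mbar g (h t x) (u (1 + i + 1) t x) ξ - Mbar g (h t x) (u (1 + i) t x) ξ) ^ 2))) := by
    apply Finset.sum_le_sum
    intro i _
    have hk := kinetic_bound g (h t x) (u (1 + i) t x) (u (1 + i + 1) t x) hg (hhpos t x)
    have hH := hhpos t x
    have habs : (0:ℝ) ≤ |G (1 + i) t x| / h t x := by positivity
    have h1 := mul_le_mul_of_nonneg_left hk habs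
    have h2 : |G (1 + i) t x| / h t x * (h t x * (u (1 + i + 1) t x - u (1 + i) t x) ^ 2 / 2)
        = |G (1 + i) t x| * (u (1 + i + 1) t x - u (1 + i) t x) ^ 2 / 2 := by
      field_simp
    have hD : G (1 + i) t x * ((u (1 + i + 1) t x) ^ 2 / 2 - (u (1 + i) t x) ^ 2 / 2 + uint (1 + i) t x * (u (1 + i) t x - u (1 + i + 1) t x))
        = -(|G (1 + i) t x| * (u (1 + i + 1) t x - u (1 + i) t x) ^ 2 / 2) := by
      rw [huint (1 + i) t x]
      rcases le_or_gt (G (1 + i) t x) 0 with hle | hlt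
      · rw [if_pos hle, abs_of_nonpos hle]; ring
      · rw [if_neg (not_le.mpr hlt), abs_of_pos hlt]; ring
    rw [hD]
    nlinarith [h1, h2]
  have trhs : -(g ^ 2 * Real.pi ^ 2 / 6) *
      ∑ α ∈ Icc 1 m, (|G α t x| / h t x) *
        (∫ ξ : ℝ, (Mbar g (h t x) (u (α + 1) t x) ξ + 2 * Mbar g (h t x) (u α t x) ξ)
          * (Mbar g (h t x) (u (α + 1) t x) ξ - Mbar g (h t x) (u α t x) ξ) ^ 2)
      = ∑ i ∈ range m, (-(g ^ 2 * Real.pi ^ 2 / 6) *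
          ((|G (1 + i) t x| / h t x) * (∫ ξ : ℝ, (Mbar g (h t x) (u (1 + i + 1) t x) ξ + 2 * Mbar g (h t x) (u (1 + i) t x) ξ) * (Mbar g (h t x) (u (1 + i + 1) t x) ξ - Mbar g (h t x) (u (1 + i) t x) ξ) ^ 2))) := by
    rw [Finset.mul_sum, hrange]
  rw [t1, t2, t3, t4, t5, trhs]
  exact tbound
end

section
/- For any h ≥ 0, u ∈ ℝ, z_b ∈ ℝ, any f ≥ 0 and any ξ ∈ ℝ, one has the subdifferential inequality H(f, ξ, z_b) ≥ H( M̄(h,u,ξ), ξ, z_b ) + ( g h + g z_b − u²/2 + ξ u ) ( f − M̄(h,u,ξ) ). -/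
/-- The kinetic entropy `H(f,ξ,z) = (ξ²/2) f + (g²π²/6) f³ + g z f`. -/
noncomputable def Hent (g f ξ z : ℝ) : ℝ :=
  ξ ^ 2 / 2 * f + g ^ 2 * Real.pi ^ 2 / 6 * f ^ 3 + g * z * f

/-!
With `A = 2gh - (ξ - u)²` and `c = gh + gz_b - u²/2 + ξu`, one has
`2 (H(f, ξ, z_b) - c f) = (gπ)² f³/3 - A f`, a cubic whose minimum over `f ≥ 0` sits where
`(gπ)² f² = max(A, 0)`, i.e. at `f = M̄(h, u, ξ)`. The inequality is this minimality.
-/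

open Real

lemma three_mul_sq_mul_sub_le_pow_three_sub {m f : ℝ} (hm : 0 ≤ m) (hf : 0 ≤ f) :
    3 * m ^ 2 * (f - m) ≤ f ^ 3 - m ^ 3 := by
  have hfactor : f ^ 3 - m ^ 3 - 3 * m ^ 2 * (f - m) = (f - m) ^ 2 * (f + 2 * m) := by ring
  linarith [mul_nonneg (sq_nonneg (f - m)) (by linarith : 0 ≤ f + 2 * m)]

lemma isMinOn_cubic_of_mul_sq_eq_max {k A m : ℝ} (hk : 0 < k) (hm : 0 ≤ m)
    (hkm : k * m ^ 2 = max A 0) :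
    IsMinOn (fun x => k * x ^ 3 / 3 - A * x) (Set.Ici 0) m := by
  intro f (hf : 0 ≤ f)
  show k * m ^ 3 / 3 - A * m ≤ k * f ^ 3 / 3 - A * f
  rcases le_or_gt A 0 with hA | hA
  · rw [max_eq_right hA] at hkm
    obtain rfl : m = 0 := by simpa [hk.ne'] using hkm
    linarith [mul_nonneg hk.le (pow_nonneg hf 3), mul_nonneg (neg_nonneg.2 hA) hf]
  · rw [max_eq_left hA.le] at hkm
    subst hkm
    linarith [mul_le_mul_of_nonneg_left (three_mul_sq_mul_sub_le_pow_three_sub hm hf) hk.le]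

lemma Mbar_nonneg {g : ℝ} (hg : 0 ≤ g) (h u ξ : ℝ) : 0 ≤ Mbar g h u ξ :=
  div_nonneg (sqrt_nonneg _) (mul_nonneg hg pi_pos.le)

lemma mul_pi_mul_Mbar_sq {g : ℝ} (hg : g ≠ 0) (h u ξ : ℝ) :
    (g * π) ^ 2 * Mbar g h u ξ ^ 2 = max (2 * g * h - (ξ - u) ^ 2) 0 := by
  rw [Mbar, div_pow, sq_sqrt (le_max_right _ _)]
  field_simp

lemma Hent_sub_mul_eq (g h u z f ξ : ℝ) :
    Hent g f ξ z - (g * h + g * z - u ^ 2 / 2 + ξ * u) * f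
      = ((g * π) ^ 2 * f ^ 3 / 3 - (2 * g * h - (ξ - u) ^ 2) * f) / 2 := by
  rw [Hent]
  ring

theorem kinetic_entropy_subdifferential_inequality_general
    (g : ℝ) (hg : 0 < g) (h u zb f ξ : ℝ) (hf : 0 ≤ f) :
    Hent g f ξ zb ≥
      Hent g (Mbar g h u ξ) ξ zb
        + (g * h + g * zb - u ^ 2 / 2 + ξ * u) * (f - Mbar g h u ξ) := by
  have hmin := isMinOn_iff.mp (isMinOn_cubic_of_mul_sq_eq_max (pow_pos (mul_pos hg pi_pos) 2)
    (Mbar_nonneg hg.le h u ξ) (mul_pi_mul_Mbar_sq hg.ne' h u ξ)) f (Set.mem_Ici.2 hf)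
  have hf_eq := Hent_sub_mul_eq g h u zb f ξ
  have hm_eq := Hent_sub_mul_eq g h u zb (Mbar g h u ξ) ξ
  linarith

/-- Subdifferential inequality for the kinetic entropy at the Maxwellian:
for any `h ≥ 0`, `u ∈ ℝ`, `z_b ∈ ℝ`, `f ≥ 0` and `ξ ∈ ℝ`,
`H(f,ξ,z_b) ≥ H(M̄(h,u,ξ),ξ,z_b) + (gh + gz_b − u²/2 + ξu)(f − M̄(h,u,ξ))`. -/
theorem kinetic_entropy_subdifferential_inequality
    (g : ℝ) (hg : 0 < g) (h u zb f ξ : ℝ) (hh : 0 ≤ h) (hf : 0 ≤ f) :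
    Hent g f ξ zb ≥
      Hent g (Mbar g h u ξ) ξ zb
        + (g * h + g * zb - u ^ 2 / 2 + ξ * u) * (f - Mbar g h u ξ) :=
  kinetic_entropy_subdifferential_inequality_general g hg h u zb f ξ hf
end

section
/- The matrix A = I_N + Δt B is invertible, and all entries of its inverse A^{-1} are nonnegative; consequently, if a vector m ∈ ℝ^N has nonnegative entries then A^{-1} m has nonnegative entries. -/
/-!
`A = 1 + Δt • B` has nonpositive off-diagonal entries and column sums `1`: the columns of `B`
sum to zero because each column only redistributes the fluxes out of one layer, and the
boundary fluxes `G 0`, `G N` vanish. Such a matrix satisfies a discrete minimum principle: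
if `x ᵥ* A ≥ 0` then `x ≥ 0`, as one sees at a minimal entry of `x`. This makes
`x ↦ x ᵥ* A` injective, so `A` is invertible, and since each row of `A⁻¹` is mapped by `A` to a
row of the identity, the rows of `A⁻¹` are nonnegative.
-/

open Matrix

namespace Matrix

variable {n : Type*} [Fintype n]

theorem sum_one_add_smul_apply [DecidableEq n] {R : Type*} [CommSemiring R] (t : R)
    (B : Matrix n n R) (j : n) : ∑ i, (1 + t • B) i j = 1 + t * ∑ i, B i j := by
  simp [Finset.sum_add_distrib, one_apply, Finset.mul_sum]

variable {R : Type*} [Field R] [LinearOrder R] [IsStrictOrderedRing R] {A : Matrix n n R}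

theorem nonneg_of_vecMul_nonneg (hoff : ∀ i j, i ≠ j → A i j ≤ 0)
    (hcol : ∀ j, 0 < ∑ i, A i j) {x : n → R} (hx : 0 ≤ x ᵥ* A) : 0 ≤ x := by
  intro i
  obtain ⟨k, -, hk⟩ := Finset.exists_min_image Finset.univ x ⟨i, Finset.mem_univ i⟩
  have hle : (x ᵥ* A) k ≤ x k * ∑ p, A p k := by
    rw [vecMul, dotProduct, Finset.mul_sum]
    refine Finset.sum_le_sum fun p _ => ?_
    rcases eq_or_ne p k with rfl | hpk
    · exact le_rfl
    · exact mul_le_mul_of_nonpos_right (hk p (Finset.mem_univ p)) (hoff p k hpk)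
  have hxk : 0 ≤ x k := nonneg_of_mul_nonneg_left ((hx k).trans hle) (hcol k)
  exact hxk.trans (hk i (Finset.mem_univ i))

variable [DecidableEq n]

theorem isUnit_of_offDiag_nonpos_of_colSum_pos (hoff : ∀ i j, i ≠ j → A i j ≤ 0)
    (hcol : ∀ j, 0 < ∑ i, A i j) : IsUnit A := by
  rw [← vecMul_injective_iff_isUnit]
  intro x y hxy
  have hzero : (x - y) ᵥ* A = 0 := by rw [sub_vecMul, sub_eq_zero]; exact hxy
  have h₁ : 0 ≤ x - y := nonneg_of_vecMul_nonneg hoff hcol hzero.ge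
  have h₂ : 0 ≤ y - x :=
    nonneg_of_vecMul_nonneg hoff hcol (by rw [← neg_sub, neg_vecMul, hzero, neg_zero])
  exact le_antisymm (sub_nonneg.mp h₂) (sub_nonneg.mp h₁)

theorem inv_apply_nonneg_of_offDiag_nonpos_of_colSum_pos (hoff : ∀ i j, i ≠ j → A i j ≤ 0)
    (hcol : ∀ j, 0 < ∑ i, A i j) (i j : n) : 0 ≤ A⁻¹ i j := by
  have hdet : IsUnit A.det :=
    (isUnit_iff_isUnit_det A).mp (isUnit_of_offDiag_nonpos_of_colSum_pos hoff hcol)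
  have hrow : A⁻¹.row i ᵥ* A = Pi.single i 1 := by
    rw [← single_one_vecMul, vecMul_vecMul, nonsing_inv_mul A hdet, vecMul_one]
  exact nonneg_of_vecMul_nonneg hoff hcol (hrow ▸ Pi.single_nonneg.mpr zero_le_one) j

end Matrix

theorem Fin.sum_univ_ite_val_eq {M : Type*} [AddCommMonoid M] {N k : ℕ} {c : M}
    (hk : k < N ∨ c = 0) : ∑ p : Fin N, (if (p : ℕ) = k then c else 0) = c := by
  rcases hk with hk | rfl
  · rw [Fintype.sum_eq_single ⟨k, hk⟩ fun p hp => if_neg fun h => hp (Fin.ext h)]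
    exact if_pos rfl
  · simp

section Upwind

variable {N : ℕ} {h G : ℕ → ℝ} {B : Matrix (Fin N) (Fin N) ℝ}

theorem offDiag_nonpos_of_upwind (hh : ∀ k, k < N → 0 < h k)
    (hBsub : ∀ i j : Fin N, j.val + 1 = i.val → B i j = min (G i.val) 0 / h j.val)
    (hBsup : ∀ i j : Fin N, i.val + 1 = j.val → B i j = -(max (G j.val) 0) / h j.val)
    (hBoff : ∀ i j : Fin N,
      i.val ≠ j.val → j.val + 1 ≠ i.val → i.val + 1 ≠ j.val → B i j = 0)
    {i j : Fin N} (hij : i ≠ j) : B i j ≤ 0 := by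
  have hj : 0 ≤ h j := (hh j j.isLt).le
  by_cases hsub : j.val + 1 = i.val
  · rw [hBsub i j hsub]
    exact div_nonpos_of_nonpos_of_nonneg (min_le_right _ _) hj
  by_cases hsup : i.val + 1 = j.val
  · rw [hBsup i j hsup]
    exact div_nonpos_of_nonpos_of_nonneg (neg_nonpos.mpr (le_max_right _ _)) hj
  exact (hBoff i j (Fin.val_ne_of_ne hij) hsub hsup).le

theorem colSum_eq_zero_of_upwind (hG0 : G 0 = 0) (hGN : G N = 0)
    (hBdiag : ∀ i : Fin N, B i i = (max (G i.val) 0 - min (G (i.val + 1)) 0) / h i.val)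
    (hBsub : ∀ i j : Fin N, j.val + 1 = i.val → B i j = min (G i.val) 0 / h j.val)
    (hBsup : ∀ i j : Fin N, i.val + 1 = j.val → B i j = -(max (G j.val) 0) / h j.val)
    (hBoff : ∀ i j : Fin N,
      i.val ≠ j.val → j.val + 1 ≠ i.val → i.val + 1 ≠ j.val → B i j = 0)
    (j : Fin N) : ∑ i, B i j = 0 := by
  set a := max (G j.val) 0
  set b := min (G (j.val + 1)) 0
  have hentry : ∀ i : Fin N, B i j = ((if i.val = j.val then a - b else 0) +
      (if i.val = j.val + 1 then b else 0) + (if i.val + 1 = j.val then -a else 0)) / h j := by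
    intro i
    by_cases hdiag : i = j
    · subst hdiag
      simp [hBdiag, a, b]
    have hne := Fin.val_ne_of_ne hdiag
    by_cases hsub : j.val + 1 = i.val
    · rw [hBsub i j hsub, ← hsub]
      split_ifs <;> first | omega | ring
    by_cases hsup : i.val + 1 = j.val
    · rw [hBsup i j hsup]
      split_ifs <;> first | omega | ring
    rw [hBoff i j hne hsub hsup]
    split_ifs <;> first | omega | ring
  have hb : j.val + 1 < N ∨ b = 0 :=
    (show j.val + 1 ≤ N from j.isLt).lt_or_eq.imp_right fun hj => by simp [b, hj, hGN]
  have ha : ∑ i : Fin N, (if i.val + 1 = j.val then -a else 0) = -a := by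
    rcases Nat.eq_zero_or_pos j.val with hj | hj
    · simp [a, hj, hG0]
    · simp_rw [show ∀ k : ℕ, k + 1 = j.val ↔ k = j.val - 1 from fun k => by omega]
      exact Fin.sum_univ_ite_val_eq (Or.inl (by omega))
  rw [Finset.sum_congr rfl fun i _ => hentry i, ← Finset.sum_div, Finset.sum_add_distrib,
    Finset.sum_add_distrib, Fin.sum_univ_ite_val_eq (Or.inl j.isLt),
    Fin.sum_univ_ite_val_eq hb, ha]
  ring

end Upwind

theorem implicit_matrix_inverse_nonneg_general
    (N : ℕ) (Δt : ℝ) (hΔt : 0 < Δt)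
    (h : ℕ → ℝ) (hh : ∀ k, k < N → 0 < h k)
    (G : ℕ → ℝ) (hG0 : G 0 = 0) (hGN : G N = 0)
    (B : Matrix (Fin N) (Fin N) ℝ)
    (hBdiag : ∀ i : Fin N,
      B i i = (max (G i.val) 0 - min (G (i.val + 1)) 0) / h i.val)
    (hBsub : ∀ i j : Fin N, j.val + 1 = i.val →
      B i j = min (G i.val) 0 / h j.val)
    (hBsup : ∀ i j : Fin N, i.val + 1 = j.val →
      B i j = -(max (G j.val) 0) / h j.val)
    (hBoff : ∀ i j : Fin N,
      i.val ≠ j.val → j.val + 1 ≠ i.val → i.val + 1 ≠ j.val → B i j = 0) :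
    IsUnit (1 + Δt • B) ∧
    (∀ i j : Fin N, 0 ≤ (1 + Δt • B)⁻¹ i j) ∧
    (∀ m : Fin N → ℝ, (∀ i, 0 ≤ m i) → ∀ i, 0 ≤ ((1 + Δt • B)⁻¹ *ᵥ m) i) := by
  have hoff : ∀ i j, i ≠ j → (1 + Δt • B) i j ≤ 0 := fun i j hij => by
    rw [Matrix.add_apply, one_apply_ne hij, zero_add, Matrix.smul_apply, smul_eq_mul]
    exact mul_nonpos_of_nonneg_of_nonpos hΔt.le
      (offDiag_nonpos_of_upwind hh hBsub hBsup hBoff hij)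
  have hcol : ∀ j, 0 < ∑ i, (1 + Δt • B) i j := fun j => by
    rw [sum_one_add_smul_apply,
      colSum_eq_zero_of_upwind hG0 hGN hBdiag hBsub hBsup hBoff j, mul_zero, add_zero]
    exact one_pos
  have hinv := inv_apply_nonneg_of_offDiag_nonpos_of_colSum_pos hoff hcol
  exact ⟨isUnit_of_offDiag_nonpos_of_colSum_pos hoff hcol, hinv,
    fun m hm i => dotProduct_nonneg_of_nonneg (hinv i) hm⟩

/-- The matrix `A = I_N + Δt B` of the implicit vertical-exchange step is invertible,
its inverse has nonnegative entries, and consequently `A⁻¹` maps entrywise-nonnegative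
vectors to entrywise-nonnegative vectors. Here `B` is the tridiagonal matrix with
`B_{α,α} = ((G_{α−1/2})₊ − (G_{α+1/2})₋)/h_α`, `B_{α,α−1} = (G_{α−1/2})₋/h_{α−1}`,
`B_{α,α+1} = −(G_{α+1/2})₊/h_{α+1}` (0-based indexing: row `i` is layer `α = i+1`,
and `G k` denotes `G_{k+1/2}`, with `G 0 = G N = 0`). -/
theorem implicit_matrix_inverse_nonneg
    (N : ℕ) (hN : 1 ≤ N) (Δt : ℝ) (hΔt : 0 < Δt)
    (h : ℕ → ℝ) (hh : ∀ k, k < N → 0 < h k)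
    (G : ℕ → ℝ) (hG0 : G 0 = 0) (hGN : G N = 0)
    (B : Matrix (Fin N) (Fin N) ℝ)
    (hBdiag : ∀ i : Fin N,
      B i i = (max (G i.val) 0 - min (G (i.val + 1)) 0) / h i.val)
    (hBsub : ∀ i j : Fin N, j.val + 1 = i.val →
      B i j = min (G i.val) 0 / h j.val)
    (hBsup : ∀ i j : Fin N, i.val + 1 = j.val →
      B i j = -(max (G j.val) 0) / h j.val)
    (hBoff : ∀ i j : Fin N,
      i.val ≠ j.val → j.val + 1 ≠ i.val → i.val + 1 ≠ j.val → B i j = 0) :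
    IsUnit (1 + Δt • B) ∧
    (∀ i j : Fin N, 0 ≤ (1 + Δt • B)⁻¹ i j) ∧
    (∀ m : Fin N → ℝ, (∀ i, 0 ≤ m i) → ∀ i, 0 ≤ ((1 + Δt • B)⁻¹ *ᵥ m) i) :=
  implicit_matrix_inverse_nonneg_general N Δt hΔt h hh G hG0 hGN B hBdiag hBsub hBsup hBoff
end

section
/- For every vector T ∈ ℝ^N with nonnegative entries, one has ‖ (Aᵀ)^{-1} T ‖_∞ ≤ ‖ T ‖_∞, where A = I_N + Δt B; in particular (since Aᵀ 𝟙 = 𝟙 where 𝟙 is the all-ones vector) the solution of the transposed linear system is uniformly bounded by the data, independently of the sizes of h_1,…,h_N. -/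
/-!
Each column of `B` sums to zero and its off-diagonal entries are nonpositive, so at an index
where `x` attains its maximum, `(Bᵀ x)ᵢ = ∑ⱼ Bⱼᵢ (xⱼ - xᵢ) ≥ 0`: a discrete maximum principle.
Since `Aᵀ x = x + Δt Bᵀ x`, it gives `max x ≤ max (Aᵀ x)` and dually `min (Aᵀ x) ≤ min x`.
Hence `Aᵀ` is injective, and for `T ≥ 0` the solution of `Aᵀ x = T` satisfies `0 ≤ x ≤ max T`.
-/

open Matrix

section MaximumPrinciple

variable {ι : Type*} [Fintype ι] {M : Matrix ι ι ℝ}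

theorem Matrix.transpose_mulVec_apply_eq_sum_mul_sub (hcol : ∀ i, ∑ j, M j i = 0)
    (x : ι → ℝ) (i : ι) : (Mᵀ *ᵥ x) i = ∑ j, M j i * (x j - x i) := by
  simp only [mulVec, dotProduct, transpose_apply, mul_sub, Finset.sum_sub_distrib,
    ← Finset.sum_mul, hcol i, zero_mul, sub_zero]

theorem Matrix.transpose_mulVec_apply_nonneg_of_isMax (hcol : ∀ i, ∑ j, M j i = 0)
    (hoff : ∀ i j, j ≠ i → M j i ≤ 0) {x : ι → ℝ} {i : ι} (hx : ∀ j, x j ≤ x i) :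
    0 ≤ (Mᵀ *ᵥ x) i := by
  rw [transpose_mulVec_apply_eq_sum_mul_sub hcol]
  refine Finset.sum_nonneg fun j _ => ?_
  rcases eq_or_ne j i with rfl | hji
  · simp
  · exact mul_nonneg_of_nonpos_of_nonpos (hoff i j hji) (sub_nonpos.2 (hx j))

variable [DecidableEq ι]

theorem Matrix.transpose_one_add_smul_mulVec (c : ℝ) (x : ι → ℝ) :
    (1 + c • M)ᵀ *ᵥ x = x + c • (Mᵀ *ᵥ x) := by
  rw [transpose_add, transpose_one, transpose_smul, add_mulVec, one_mulVec, smul_mulVec]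

variable {c : ℝ}

theorem Matrix.le_of_transpose_one_add_smul_mulVec_le (hcol : ∀ i, ∑ j, M j i = 0)
    (hoff : ∀ i j, j ≠ i → M j i ≤ 0) (hc : 0 ≤ c) {x : ι → ℝ} {b : ℝ}
    (hb : ∀ i, ((1 + c • M)ᵀ *ᵥ x) i ≤ b) (j : ι) : x j ≤ b := by
  have : Nonempty ι := ⟨j⟩
  obtain ⟨i, hi⟩ := Finite.exists_max x
  have hMx := transpose_mulVec_apply_nonneg_of_isMax hcol hoff hi
  have hbi := hb i
  rw [transpose_one_add_smul_mulVec] at hbi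
  simp only [Pi.add_apply, Pi.smul_apply, smul_eq_mul] at hbi
  linarith [hi j, mul_nonneg hc hMx]

theorem Matrix.le_of_le_transpose_one_add_smul_mulVec (hcol : ∀ i, ∑ j, M j i = 0)
    (hoff : ∀ i j, j ≠ i → M j i ≤ 0) (hc : 0 ≤ c) {x : ι → ℝ} {b : ℝ}
    (hb : ∀ i, b ≤ ((1 + c • M)ᵀ *ᵥ x) i) (j : ι) : b ≤ x j := by
  have := le_of_transpose_one_add_smul_mulVec_le hcol hoff hc (x := -x) (b := -b)
    (fun i => by simpa [mulVec_neg] using hb i) j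
  simpa using this

theorem Matrix.isUnit_transpose_one_add_smul (hcol : ∀ i, ∑ j, M j i = 0)
    (hoff : ∀ i j, j ≠ i → M j i ≤ 0) (hc : 0 ≤ c) : IsUnit (1 + c • M)ᵀ := by
  refine mulVec_injective_iff_isUnit.1 fun x y hxy => funext fun j => ?_
  have hz : ∀ i, ((1 + c • M)ᵀ *ᵥ (x - y)) i = 0 := fun i => by
    rw [mulVec_sub, hxy, sub_self, Pi.zero_apply]
  have hle := le_of_transpose_one_add_smul_mulVec_le hcol hoff hc (fun i => (hz i).le) j
  have hge := le_of_le_transpose_one_add_smul_mulVec hcol hoff hc (fun i => (hz i).ge) j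
  simp only [Pi.sub_apply] at hle hge
  linarith

theorem Matrix.transpose_one_add_smul_mulVec_const_one (hcol : ∀ i, ∑ j, M j i = 0) :
    (1 + c • M)ᵀ *ᵥ (fun _ => (1 : ℝ)) = fun _ => 1 := by
  rw [transpose_one_add_smul_mulVec]
  ext i
  simp [transpose_mulVec_apply_eq_sum_mul_sub hcol]

theorem Matrix.norm_inv_transpose_one_add_smul_mulVec_le (hcol : ∀ i, ∑ j, M j i = 0)
    (hoff : ∀ i j, j ≠ i → M j i ≤ 0) (hc : 0 ≤ c) {T : ι → ℝ} (hT : ∀ i, 0 ≤ T i) :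
    ‖((1 + c • M)ᵀ)⁻¹ *ᵥ T‖ ≤ ‖T‖ := by
  have hU := (isUnit_transpose_one_add_smul hcol hoff hc).map detMonoidHom
  set x := ((1 + c • M)ᵀ)⁻¹ *ᵥ T
  have hx : (1 + c • M)ᵀ *ᵥ x = T := by
    rw [mulVec_mulVec, mul_nonsing_inv _ hU, one_mulVec]
  refine (pi_norm_le_iff_of_nonneg (norm_nonneg T)).2 fun j => abs_le.2 ⟨?_, ?_⟩
  · have := le_of_le_transpose_one_add_smul_mulVec hcol hoff hc (x := x) (b := 0)
      (fun i => hx ▸ hT i) j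
    linarith [norm_nonneg T]
  · exact le_of_transpose_one_add_smul_mulVec_le hcol hoff hc (x := x)
      (fun i => by rw [hx]; exact (le_abs_self _).trans (norm_le_pi_norm T i)) j

end MaximumPrinciple

theorem Fin.sum_ite_val_eq {N : ℕ} (k : ℕ) {a : ℝ} (ha : N ≤ k → a = 0) :
    ∑ j : Fin N, (if (j : ℕ) = k then a else 0) = a := by
  by_cases hk : k < N
  · simpa [Fin.ext_iff] using Finset.sum_ite_eq' Finset.univ (⟨k, hk⟩ : Fin N) (fun _ => a)
  · rw [ha (not_lt.1 hk), Finset.sum_eq_zero]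
    intro j _
    simp

structure IsUpwindMatrix {N : ℕ} (h G : ℕ → ℝ) (B : Matrix (Fin N) (Fin N) ℝ) : Prop where
  diag : ∀ i : Fin N, B i i = (max (G i.val) 0 - min (G (i.val + 1)) 0) / h i.val
  sub : ∀ i j : Fin N, j.val + 1 = i.val → B i j = min (G i.val) 0 / h j.val
  sup : ∀ i j : Fin N, i.val + 1 = j.val → B i j = -(max (G j.val) 0) / h j.val
  off : ∀ i j : Fin N, i.val ≠ j.val → j.val + 1 ≠ i.val → i.val + 1 ≠ j.val → B i j = 0

namespace IsUpwindMatrix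

variable {N : ℕ} {h G : ℕ → ℝ} {B : Matrix (Fin N) (Fin N) ℝ}

theorem apply_nonpos (hB : IsUpwindMatrix h G B) (hh : ∀ k, k < N → 0 < h k) {i j : Fin N}
    (hji : j ≠ i) : B j i ≤ 0 := by
  have hi := (hh i i.isLt).le
  by_cases hs : (i : ℕ) + 1 = j
  · rw [hB.sub j i hs]
    exact div_nonpos_of_nonpos_of_nonneg (min_le_right _ _) hi
  by_cases hu : (j : ℕ) + 1 = i
  · rw [hB.sup j i hu]
    exact div_nonpos_of_nonpos_of_nonneg (neg_nonpos.2 (le_max_right _ _)) hi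
  · rw [hB.off j i (Fin.val_ne_of_ne hji) hs hu]

theorem apply_eq_ite (hB : IsUpwindMatrix h G B) (i j : Fin N) :
    B j i = (if j = i then (max (G i) 0 - min (G (i + 1)) 0) / h i else 0)
      + (if (j : ℕ) = i + 1 then min (G (i + 1)) 0 / h i else 0)
      + (if (j : ℕ) + 1 = i then -(max (G i) 0) / h i else 0) := by
  by_cases hd : j = i
  · subst hd
    simp [hB.diag]
  by_cases hs : (j : ℕ) = i + 1
  · rw [hB.sub j i hs.symm, if_neg hd, if_pos hs, if_neg (by omega), hs]
    ring
  by_cases hu : (j : ℕ) + 1 = i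
  · simp [hd, hs, hu, hB.sup j i hu]
  · simp [hd, hs, hu, hB.off j i (Fin.val_ne_of_ne hd) (Ne.symm hs) hu]

theorem sum_apply_eq_zero (hB : IsUpwindMatrix h G B) (hG0 : G 0 = 0) (hGN : G N = 0)
    (i : Fin N) : ∑ j, B j i = 0 := by
  have hL : ∑ j : Fin N, (if (j : ℕ) = i + 1 then min (G (i + 1)) 0 / h i else 0)
      = min (G (i + 1)) 0 / h i :=
    Fin.sum_ite_val_eq _ fun hN => by rw [show (i : ℕ) + 1 = N by omega, hGN]; simp
  have hU : ∑ j : Fin N, (if (j : ℕ) + 1 = i then -(max (G i) 0) / h i else 0)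
      = -(max (G i) 0) / h i := by
    obtain ⟨_ | m, hm⟩ := i
    · simp [hG0]
    · simpa using Fin.sum_ite_val_eq m fun hN => absurd hm (by omega)
  simp only [hB.apply_eq_ite i, Finset.sum_add_distrib, Finset.sum_ite_eq', Finset.mem_univ,
    if_true, hL, hU]
  ring

end IsUpwindMatrix

theorem implicit_matrix_transpose_sup_norm_bound_general
    (N : ℕ) (Δt : ℝ) (hΔt : 0 < Δt)
    (h : ℕ → ℝ) (hh : ∀ k, k < N → 0 < h k)
    (G : ℕ → ℝ) (hG0 : G 0 = 0) (hGN : G N = 0)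
    (B : Matrix (Fin N) (Fin N) ℝ)
    (hBdiag : ∀ i : Fin N,
      B i i = (max (G i.val) 0 - min (G (i.val + 1)) 0) / h i.val)
    (hBsub : ∀ i j : Fin N, j.val + 1 = i.val →
      B i j = min (G i.val) 0 / h j.val)
    (hBsup : ∀ i j : Fin N, i.val + 1 = j.val →
      B i j = -(max (G j.val) 0) / h j.val)
    (hBoff : ∀ i j : Fin N,
      i.val ≠ j.val → j.val + 1 ≠ i.val → i.val + 1 ≠ j.val → B i j = 0) :
    ((1 + Δt • B)ᵀ *ᵥ (fun _ => (1 : ℝ))) = (fun _ => (1 : ℝ)) ∧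
    (∀ T : Fin N → ℝ, (∀ i, 0 ≤ T i) →
      ‖((1 + Δt • B)ᵀ)⁻¹ *ᵥ T‖ ≤ ‖T‖) := by
  have hB : IsUpwindMatrix h G B := ⟨hBdiag, hBsub, hBsup, hBoff⟩
  have hcol : ∀ i, ∑ j, B j i = 0 := hB.sum_apply_eq_zero hG0 hGN
  have hoff : ∀ i j, j ≠ i → B j i ≤ 0 := fun _ _ hji => hB.apply_nonpos hh hji
  exact ⟨transpose_one_add_smul_mulVec_const_one hcol,
    fun _ hT => norm_inv_transpose_one_add_smul_mulVec_le hcol hoff hΔt.le hT⟩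

/-- For `A = I_N + Δt B` (same tridiagonal `B` as in the implicit vertical-exchange
step, whose columns sum to zero), one has `Aᵀ 𝟙 = 𝟙` and, for every vector `T` with
nonnegative entries, `‖(Aᵀ)⁻¹ T‖_∞ ≤ ‖T‖_∞` (the sup norm on `Fin N → ℝ`):
the solution of the transposed linear system is bounded by the data,
uniformly in `h_1, …, h_N`. -/
theorem implicit_matrix_transpose_sup_norm_bound
    (N : ℕ) (hN : 1 ≤ N) (Δt : ℝ) (hΔt : 0 < Δt)
    (h : ℕ → ℝ) (hh : ∀ k, k < N → 0 < h k)
    (G : ℕ → ℝ) (hG0 : G 0 = 0) (hGN : G N = 0)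
    (B : Matrix (Fin N) (Fin N) ℝ)
    (hBdiag : ∀ i : Fin N,
      B i i = (max (G i.val) 0 - min (G (i.val + 1)) 0) / h i.val)
    (hBsub : ∀ i j : Fin N, j.val + 1 = i.val →
      B i j = min (G i.val) 0 / h j.val)
    (hBsup : ∀ i j : Fin N, i.val + 1 = j.val →
      B i j = -(max (G j.val) 0) / h j.val)
    (hBoff : ∀ i j : Fin N,
      i.val ≠ j.val → j.val + 1 ≠ i.val → i.val + 1 ≠ j.val → B i j = 0) :
    ((1 + Δt • B)ᵀ *ᵥ (fun _ => (1 : ℝ))) = (fun _ => (1 : ℝ)) ∧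
    (∀ T : Fin N → ℝ, (∀ i, 0 ≤ T i) →
      ‖((1 + Δt • B)ᵀ)⁻¹ *ᵥ T‖ ≤ ‖T‖) :=
  implicit_matrix_transpose_sup_norm_bound_general N Δt hΔt h hh G hG0 hGN B hBdiag hBsub hBsup
    hBoff
end

section
/- Entropy moments of the kinetic Maxwellian: for all h ≥ 0, u ∈ ℝ and z_b ∈ ℝ, ∫_ℝ H( M̄(h,u,ξ), ξ, z_b ) dξ = h u²/2 + g h²/2 + g z_b h, and ∫_ℝ ξ H( M̄(h,u,ξ), ξ, z_b ) dξ = u ( h u²/2 + g h² + g z_b h ). -/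
open MeasureTheory

/-!
With `x = ξ - u` and `r = 2gh`, `M̄ = √(r - x²)₊ / (gπ)` and `M̄³ = (r - x²) M̄ / (gπ)²`, so both
integrands are cubic polynomials in `x` times the semicircle `√(r - x²)₊`. Its odd moments vanish by
symmetry, and its zeroth and second moments `π r / 2` and `π r² / 8` follow by rescaling to the unit
semicircle and substituting `x = sin θ`.
-/

open Real Set Function

/-- `r` is the squared radius, so that `Mbar g h u ξ = semicircle (2 * g * h) (ξ - u) / (g * π)`
holds by definition. -/
noncomputable def semicircle (r x : ℝ) : ℝ :=
  √(max (r - x ^ 2) 0)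

@[fun_prop]
lemma continuous_semicircle (r : ℝ) : Continuous (semicircle r) := by
  unfold semicircle; fun_prop

lemma semicircle_neg (r x : ℝ) : semicircle r (-x) = semicircle r x := by
  simp [semicircle]

lemma semicircle_eq_zero_of_le {r x : ℝ} (hx : r ≤ x ^ 2) : semicircle r x = 0 := by
  simp [semicircle, max_eq_right (sub_nonpos.2 hx)]

lemma semicircle_pow_three (r x : ℝ) : semicircle r x ^ 3 = (r - x ^ 2) * semicircle r x := by
  rcases le_total (x ^ 2) r with hx | hx
  · rw [pow_succ, semicircle, sq_sqrt (le_max_right _ _), max_eq_left (sub_nonneg.2 hx)]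
  · simp [semicircle_eq_zero_of_le hx]

lemma semicircle_sq_mul {a : ℝ} (ha : 0 ≤ a) (s t : ℝ) :
    semicircle (a ^ 2 * s) (a * t) = a * semicircle s t := by
  rcases le_total (t ^ 2) s with ht | ht
  · rw [semicircle, semicircle, max_eq_left (by nlinarith), max_eq_left (by linarith),
      show a ^ 2 * s - (a * t) ^ 2 = a ^ 2 * (s - t ^ 2) by ring,
      sqrt_mul (sq_nonneg a), sqrt_sq ha]
  · rw [semicircle_eq_zero_of_le ht, semicircle_eq_zero_of_le (by nlinarith), mul_zero]

lemma hasCompactSupport_semicircle (r : ℝ) : HasCompactSupport (semicircle r) := by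
  refine .intro (isCompact_closedBall 0 √r) fun x hx => semicircle_eq_zero_of_le ?_
  rw [Metric.mem_closedBall, dist_zero_right, norm_eq_abs, not_le] at hx
  rw [← sq_abs]
  exact ((sqrt_lt' ((sqrt_nonneg r).trans_lt hx)).1 hx).le

lemma integrable_pow_mul_semicircle (r : ℝ) (n : ℕ) :
    Integrable (fun x => x ^ n * semicircle r x) :=
  (by fun_prop : Continuous fun x => x ^ n * semicircle r x).integrable_of_hasCompactSupport
    (hasCompactSupport_semicircle r).mul_left

lemma integral_pow_mul_semicircle_of_odd (r : ℝ) {n : ℕ} (hn : Odd n) :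
    ∫ x, x ^ n * semicircle r x = 0 := by
  have h := integral_neg_eq_self (fun x => x ^ n * semicircle r x) volume
  simp only [hn.neg_pow, semicircle_neg, neg_mul, integral_neg] at h
  linarith

lemma integral_pow_mul_semicircle_sq_mul {a : ℝ} (ha : 0 ≤ a) (n : ℕ) :
    ∫ x, x ^ n * semicircle (a ^ 2) x = a ^ (n + 2) * ∫ x, x ^ n * semicircle 1 x := by
  rcases ha.eq_or_lt with rfl | ha
  · simp [semicircle_eq_zero_of_le (sq_nonneg _)]
  have hscale : ∀ t, (a * t) ^ n * semicircle (a ^ 2) (a * t)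
      = a ^ (n + 1) * (t ^ n * semicircle 1 t) := fun t => by
    rw [← mul_one (a ^ 2), semicircle_sq_mul ha.le]; ring
  have h := Measure.integral_comp_mul_left (fun x => x ^ n * semicircle (a ^ 2) x) a
  simp only [hscale, integral_const_mul, abs_inv, abs_of_pos ha, smul_eq_mul] at h
  field_simp at h
  rw [← h]; ring

lemma integral_pow_mul_semicircle_one (n : ℕ) :
    ∫ x, x ^ n * semicircle 1 x = ∫ θ in -(π / 2)..π / 2, sin θ ^ n * cos θ ^ 2 := by
  have hsupp : support (fun x => x ^ n * semicircle 1 x) ⊆ Ioc (-1) 1 := by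
    intro x hx
    have hx2 : x ^ 2 < 1 := by
      by_contra! h
      exact hx (by simp [semicircle_eq_zero_of_le h])
    constructor <;> nlinarith
  calc ∫ x, x ^ n * semicircle 1 x
      = ∫ x in sin (-(π / 2))..sin (π / 2), x ^ n * semicircle 1 x := by
        rw [sin_neg, sin_pi_div_two, intervalIntegral.integral_eq_integral_of_support_subset hsupp]
    _ = ∫ θ in -(π / 2)..π / 2, sin θ ^ n * semicircle 1 (sin θ) * cos θ :=
        (intervalIntegral.integral_comp_mul_deriv (fun θ _ => hasDerivAt_sin θ) continuousOn_cos
          (by fun_prop)).symm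
    _ = ∫ θ in -(π / 2)..π / 2, sin θ ^ n * cos θ ^ 2 := by
        refine intervalIntegral.integral_congr fun θ hθ => ?_
        rw [uIcc_of_le (by linarith [pi_pos])] at hθ
        rw [semicircle, ← cos_sq', max_eq_left (sq_nonneg _), sqrt_sq (cos_nonneg_of_mem_Icc hθ)]
        ring

lemma integral_semicircle {r : ℝ} (hr : 0 ≤ r) : ∫ x, semicircle r x = π * r / 2 := by
  have h := integral_pow_mul_semicircle_sq_mul (sqrt_nonneg r) 0
  rw [integral_pow_mul_semicircle_one, sq_sqrt hr] at h
  simp only [pow_zero, one_mul, integral_cos_sq] at h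
  rw [h, cos_neg, cos_pi_div_two]
  ring

lemma integral_sq_mul_semicircle {r : ℝ} (hr : 0 ≤ r) :
    ∫ x, x ^ 2 * semicircle r x = π * r ^ 2 / 8 := by
  have h := integral_pow_mul_semicircle_sq_mul (sqrt_nonneg r) 2
  rw [integral_pow_mul_semicircle_one, sq_sqrt hr, integral_sin_sq_mul_cos_sq] at h
  rw [h, show 4 * (π / 2) = 2 * π by ring, show 4 * -(π / 2) = -(2 * π) by ring, sin_neg,
    sin_two_pi, show 2 + 2 = 2 * 2 from rfl, pow_mul, sq_sqrt hr]
  ring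

lemma integral_cubic_mul_semicircle_sub {r : ℝ} (hr : 0 ≤ r) (c₀ c₁ c₂ c₃ u : ℝ) :
    ∫ ξ, (c₀ + c₁ * (ξ - u) + c₂ * (ξ - u) ^ 2 + c₃ * (ξ - u) ^ 3) * semicircle r (ξ - u)
      = c₀ * (π * r / 2) + c₂ * (π * r ^ 2 / 8) := by
  have hI (c : ℝ) (n : ℕ) : Integrable (fun x => c * (x ^ n * semicircle r x)) :=
    (integrable_pow_mul_semicircle r n).const_mul c
  have hexpand : ∀ x, (c₀ + c₁ * x + c₂ * x ^ 2 + c₃ * x ^ 3) * semicircle r x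
      = c₀ * (x ^ 0 * semicircle r x) + c₁ * (x ^ 1 * semicircle r x)
        + c₂ * (x ^ 2 * semicircle r x) + c₃ * (x ^ 3 * semicircle r x) := fun x => by ring
  rw [integral_sub_right_eq_self
      (fun x => (c₀ + c₁ * x + c₂ * x ^ 2 + c₃ * x ^ 3) * semicircle r x) u]
  simp only [hexpand]
  rw [integral_add ?_ (hI _ _), integral_add ?_ (hI _ _), integral_add (hI _ _) (hI _ _)]
  · simp only [integral_const_mul, pow_zero, one_mul, integral_semicircle hr,
      integral_sq_mul_semicircle hr, integral_pow_mul_semicircle_of_odd r odd_one,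
      integral_pow_mul_semicircle_of_odd r (by decide : Odd 3)]
    ring
  · exact (hI _ _).add (hI _ _)
  · exact ((hI _ _).add (hI _ _)).add (hI _ _)

/-- Entropy moments of the kinetic Maxwellian: for all `h ≥ 0`, `u ∈ ℝ`, `z_b ∈ ℝ`,
`∫ H(M̄(h,u,ξ),ξ,z_b) dξ = h u²/2 + g h²/2 + g z_b h` and
`∫ ξ H(M̄(h,u,ξ),ξ,z_b) dξ = u (h u²/2 + g h² + g z_b h)`. -/
theorem maxwellian_entropy_moments
    (g : ℝ) (hg : 0 < g) (h u zb : ℝ) (hh : 0 ≤ h) :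
    (∫ ξ : ℝ, Hent g (Mbar g h u ξ) ξ zb)
        = h * u ^ 2 / 2 + g * h ^ 2 / 2 + g * zb * h ∧
    (∫ ξ : ℝ, ξ * Hent g (Mbar g h u ξ) ξ zb)
        = u * (h * u ^ 2 / 2 + g * h ^ 2 + g * zb * h) := by
  have hr : 0 ≤ 2 * g * h := by positivity
  set c := u ^ 2 / 2 + g * zb + g * h / 3
  have hHent : ∀ ξ, Hent g (Mbar g h u ξ) ξ zb
      = (c + u * (ξ - u) + 1 / 3 * (ξ - u) ^ 2 + 0 * (ξ - u) ^ 3)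
        * semicircle (2 * g * h) (ξ - u) / (g * π) := fun ξ => by
    rw [Hent, Mbar, ← semicircle, div_pow, semicircle_pow_three]
    field_simp
    ring
  have hξHent : ∀ ξ, ξ * Hent g (Mbar g h u ξ) ξ zb
      = (u * c + (c + u ^ 2) * (ξ - u) + 4 * u / 3 * (ξ - u) ^ 2 + 1 / 3 * (ξ - u) ^ 3)
        * semicircle (2 * g * h) (ξ - u) / (g * π) := fun ξ => by
    rw [hHent]
    ring
  rw [funext hHent, funext hξHent, integral_div, integral_div,
    integral_cubic_mul_semicircle_sub hr, integral_cubic_mul_semicircle_sub hr]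
  constructor <;> field_simp <;> ring
end
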